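/- arXiv:1606.00639 — 9 statements merged into one kernel-verified Lean document; each statement's English description precedes it below -/
import Mathlib

section
/- Jacobi triple product: for all real numbers X and Y with 0 < X < 1 and Y ≠ 0, the infinite product ∏_{i=1}^∞ (1 − X^{2i})(1 + X^{2i−1} Y²)(1 + X^{2i−1} Y^{−2}) converges, the two-sided series ∑_{j=−∞}^∞ X^{j²} Y^{2j} converges absolutely, and the two are equal: ∏_{i=1}^∞ (1 − X^{2i})(1 + X^{2i−1} Y²)(1 + X^{2i−1}/Y²) = ∑_{j=−∞}^∞ X^{j²} Y^{2j}. -/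
/-!
With `q = x²` and `t = x z / q^n`, the q-binomial theorem
`∏_{i<2n} (1 + q^i t) = ∑_k q^{k(k-1)/2} [2n choose k]_q t^k`, after pairing the factors
`i = n - 1 - j` and `i = n + j`, becomes the finite triple product identity
`∏_{j<n} (1 + x^{2j+1} z)(1 + x^{2j+1} / z) = ∑_{|m| ≤ n} [2n choose n+m]_q x^{m²} z^m`.
Multiplied by `(q;q)_n`, the coefficient of `x^{m²} z^m` becomes
`(q;q)_n (q;q)_{2n} / ((q;q)_{n+m} (q;q)_{n-m})`, which is bounded by `(q;q)_∞⁻²` and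
tends to `1` as `n → ∞`; dominated convergence over `m ∈ ℤ` gives the infinite identity.
-/

open Finset Filter Topology

section qBinomial

variable {R : Type*} [CommSemiring R] (q : R)

def qBinomial : ℕ → ℕ → R
  | _, 0 => 1
  | 0, _ + 1 => 0
  | n + 1, k + 1 => q ^ (k + 1) * qBinomial n (k + 1) + qBinomial n k

@[simp] lemma qBinomial_zero_right (n : ℕ) : qBinomial q n 0 = 1 := by
  cases n <;> rfl

lemma qBinomial_succ_succ (n k : ℕ) :
    qBinomial q (n + 1) (k + 1) = q ^ (k + 1) * qBinomial q n (k + 1) + qBinomial q n k := rfl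

lemma qBinomial_eq_zero_of_lt {n k : ℕ} (h : n < k) : qBinomial q n k = 0 := by
  induction n generalizing k with
  | zero => obtain ⟨k, rfl⟩ := Nat.exists_eq_add_one_of_ne_zero h.ne'; rfl
  | succ n ih =>
    obtain ⟨k, rfl⟩ := Nat.exists_eq_add_one_of_ne_zero (by omega : k ≠ 0)
    rw [qBinomial_succ_succ, ih (by omega), ih (by omega), mul_zero, add_zero]

@[simp] lemma qBinomial_self (n : ℕ) : qBinomial q n n = 1 := by
  induction n with
  | zero => rfl
  | succ n ih =>
    rw [qBinomial_succ_succ, qBinomial_eq_zero_of_lt q n.lt_succ_self, ih, mul_zero, zero_add]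

theorem prod_range_one_add_pow_mul (n : ℕ) (t : R) :
    ∏ i ∈ range n, (1 + q ^ i * t) =
      ∑ k ∈ range (n + 1), q ^ k.choose 2 * qBinomial q n k * t ^ k := by
  induction n generalizing t with
  | zero => simp
  | succ n ih =>
    -- peel off the factor `i = 0` and apply the induction hypothesis at `q t`
    set a : ℕ → R := fun k ↦ q ^ k.choose 2 * qBinomial q n k * (q * t) ^ k with ha
    have hterm (k : ℕ) : q ^ (k + 1).choose 2 * qBinomial q (n + 1) (k + 1) * t ^ (k + 1) =
        a (k + 1) + t * a k := by
      simp only [ha, Nat.choose_succ_succ', Nat.choose_one_right, qBinomial_succ_succ, mul_pow,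
        pow_add]
      ring
    have hlast : a (n + 1) = 0 := by simp [ha, qBinomial_eq_zero_of_lt q n.lt_succ_self]
    calc ∏ i ∈ range (n + 1), (1 + q ^ i * t)
        = (∑ k ∈ range (n + 1), a k) * (1 + t) := by
          simp only [prod_range_succ', pow_succ, mul_assoc, ih (q * t), pow_zero, one_mul, ha]
      _ = (∑ k ∈ range (n + 1 + 1), a k) + t * ∑ k ∈ range (n + 1), a k := by
          rw [sum_range_succ _ (n + 1), hlast]
          ring
      _ = _ := by
          rw [sum_range_succ', sum_range_succ' _ (n + 1)]
          simp only [hterm, sum_add_distrib, mul_sum, ha, Nat.choose_zero_succ, pow_zero,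
            qBinomial_zero_right, mul_one]
          ring

end qBinomial

section qPochhammer

variable {R : Type*} [CommRing R] (q : R)

def qPochhammer (n : ℕ) : R := ∏ i ∈ range n, (1 - q ^ (i + 1))

@[simp] lemma qPochhammer_zero : qPochhammer q 0 = 1 := rfl

lemma qPochhammer_succ (n : ℕ) :
    qPochhammer q (n + 1) = qPochhammer q n * (1 - q ^ (n + 1)) :=
  prod_range_succ _ n

theorem qPochhammer_mul_qPochhammer_mul_qBinomial (k l : ℕ) :
    qPochhammer q k * qPochhammer q l * qBinomial q (k + l) k = qPochhammer q (k + l) := by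
  induction k generalizing l with
  | zero => simp
  | succ k ihk =>
    induction l with
    | zero => simp
    | succ l ihl =>
      have hk := ihk (l + 1)
      rw [← add_assoc, add_right_comm] at hk
      rw [← add_assoc, qBinomial_succ_succ, qPochhammer_succ q (k + 1 + l)]
      rw [qPochhammer_succ q k, qPochhammer_succ q l] at *
      linear_combination q ^ (k + 1) * (1 - q ^ (l + 1)) * ihl + (1 - q ^ (k + 1)) * hk

end qPochhammer

lemma sum_range_two_mul_add_one (n : ℕ) : ∑ j ∈ range n, (2 * j + 1) = n ^ 2 := by
  induction n with
  | zero => rfl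
  | succ n ih => rw [sum_range_succ, ih]; ring

lemma two_mul_choose_two_add_self (k : ℕ) : 2 * k.choose 2 + k = k ^ 2 := by
  induction k with
  | zero => rfl
  | succ k ih => rw [Nat.choose_succ_succ', Nat.choose_one_right]; linear_combination ih

lemma sum_range_two_mul_add_one_eq_sum_Icc {M : Type*} [AddCommMonoid M] (n : ℕ)
    (g : ℕ → ℤ → M) :
    ∑ k ∈ range (2 * n + 1), g k (k - n) = ∑ m ∈ Icc (-(n : ℤ)) n, g (n + m).toNat m := by
  refine sum_nbij' (fun k ↦ (k : ℤ) - n) (fun m ↦ (n + m).toNat) ?_ ?_ ?_ ?_ ?_ <;>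
    intros <;> simp_all <;> omega

theorem prod_range_one_add_mul_one_add_div {K : Type*} [Field K] {x z : K} (hx : x ≠ 0)
    (hz : z ≠ 0) (n : ℕ) :
    ∏ j ∈ range n, (1 + x ^ (2 * j + 1) * z) * (1 + x ^ (2 * j + 1) / z) =
      ∑ m ∈ Icc (-(n : ℤ)) n,
        qBinomial (x ^ 2) (2 * n) (n + m).toNat * x ^ (m ^ 2) * z ^ m := by
  set c : K := z ^ n / x ^ (n ^ 2)
  set t : K := x * z / (x ^ 2) ^ n
  have hprod : ∏ i ∈ range (2 * n), (1 + (x ^ 2) ^ i * t) =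
      c * ∏ j ∈ range n, (1 + x ^ (2 * j + 1) * z) * (1 + x ^ (2 * j + 1) / z) := by
    have hlow (j : ℕ) (hj : j ∈ range n) :
        1 + (x ^ 2) ^ (n - 1 - j) * t = z / x ^ (2 * j + 1) * (1 + x ^ (2 * j + 1) / z) := by
      obtain ⟨r, rfl⟩ := Nat.exists_eq_add_of_lt (mem_range.mp hj)
      simp only [show j + r + 1 - 1 - j = r by omega, t]
      field_simp
      ring
    have hhigh (i : ℕ) (_ : i ∈ range n) :
        1 + (x ^ 2) ^ (n + i) * t = 1 + x ^ (2 * i + 1) * z := by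
      simp only [t]
      field_simp
      ring
    rw [two_mul, prod_range_add, ← prod_range_reflect, prod_congr rfl hlow, prod_congr rfl hhigh,
      prod_mul_distrib, prod_div_distrib, prod_const, prod_pow_eq_pow_sum,
      sum_range_two_mul_add_one, card_range, prod_mul_distrib]
    ring
  have hterm (k : ℕ) (_ : k ∈ range (2 * n + 1)) :
      (x ^ 2) ^ k.choose 2 * qBinomial (x ^ 2) (2 * n) k * t ^ k =
        c * (qBinomial (x ^ 2) (2 * n) k * x ^ (((k : ℤ) - n) ^ 2) * z ^ ((k : ℤ) - n)) := by
    have hexp :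
        ((k : ℤ) - n) ^ 2 = ((k ^ 2 + n ^ 2 : ℕ) : ℤ) - ((2 * n * k : ℕ) : ℤ) := by
      push_cast
      ring
    rw [hexp, zpow_sub₀ hx, zpow_sub₀ hz, zpow_natCast, zpow_natCast, zpow_natCast,
      zpow_natCast, pow_add, ← two_mul_choose_two_add_self k]
    simp only [t, c, div_pow, mul_pow, ← pow_mul]
    field_simp
    ring
  rw [← sum_range_two_mul_add_one_eq_sum_Icc n fun k m ↦
    qBinomial (x ^ 2) (2 * n) k * x ^ (m ^ 2) * z ^ m]
  apply mul_left_cancel₀ (by positivity : c ≠ 0)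
  rw [mul_sum, ← sum_congr rfl hterm, ← prod_range_one_add_pow_mul, hprod]

section Real

variable {q : ℝ}

lemma one_sub_pow_succ_pos (hq0 : 0 ≤ q) (hq1 : q < 1) (i : ℕ) : 0 < 1 - q ^ (i + 1) :=
  sub_pos.2 (pow_lt_one₀ hq0 hq1 i.succ_ne_zero)

lemma qPochhammer_pos (hq0 : 0 ≤ q) (hq1 : q < 1) (n : ℕ) : 0 < qPochhammer q n :=
  prod_pos fun i _ ↦ one_sub_pow_succ_pos hq0 hq1 i

lemma qPochhammer_le_one (hq0 : 0 ≤ q) (hq1 : q < 1) (n : ℕ) : qPochhammer q n ≤ 1 :=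
  prod_le_one (fun i _ ↦ (one_sub_pow_succ_pos hq0 hq1 i).le)
    fun _ _ ↦ sub_le_self _ (pow_nonneg hq0 _)

lemma qPochhammer_antitone (hq0 : 0 ≤ q) (hq1 : q < 1) : Antitone (qPochhammer q) :=
  antitone_nat_of_succ_le fun n ↦ by
    rw [qPochhammer_succ]
    exact mul_le_of_le_one_right (qPochhammer_pos hq0 hq1 n).le (sub_le_self _ (pow_nonneg hq0 _))

lemma summable_norm_neg_pow_succ (hq0 : 0 ≤ q) (hq1 : q < 1) :
    Summable fun i : ℕ ↦ ‖-q ^ (i + 1)‖ := by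
  simpa [pow_succ, abs_of_nonneg hq0] using (summable_geometric_of_lt_one hq0 hq1).mul_right q

lemma multipliable_one_sub_pow_succ (hq0 : 0 ≤ q) (hq1 : q < 1) :
    Multipliable fun i : ℕ ↦ 1 - q ^ (i + 1) := by
  simpa [sub_eq_add_neg] using multipliable_one_add_of_summable (summable_norm_neg_pow_succ hq0 hq1)

lemma tendsto_qPochhammer (hq0 : 0 ≤ q) (hq1 : q < 1) :
    Tendsto (qPochhammer q) atTop (𝓝 (∏' i : ℕ, (1 - q ^ (i + 1)))) :=
  (multipliable_one_sub_pow_succ hq0 hq1).hasProd.tendsto_prod_nat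

lemma tprod_one_sub_pow_succ_pos (hq0 : 0 ≤ q) (hq1 : q < 1) :
    0 < ∏' i : ℕ, (1 - q ^ (i + 1)) := by
  refine (tprod_nonneg fun i ↦ (one_sub_pow_succ_pos hq0 hq1 i).le).lt_of_ne' ?_
  simpa [sub_eq_add_neg] using tprod_one_add_ne_zero_of_summable
    (fun i ↦ by simpa [← sub_eq_add_neg] using (one_sub_pow_succ_pos hq0 hq1 i).ne')
    (summable_norm_neg_pow_succ hq0 hq1)

lemma tprod_one_sub_pow_succ_le_qPochhammer (hq0 : 0 ≤ q) (hq1 : q < 1) (n : ℕ) :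
    ∏' i : ℕ, (1 - q ^ (i + 1)) ≤ qPochhammer q n :=
  (qPochhammer_antitone hq0 hq1).le_of_tendsto (tendsto_qPochhammer hq0 hq1) n

lemma qPochhammer_mul_qBinomial_eq {n : ℕ} {m : ℤ} (hq0 : 0 ≤ q) (hq1 : q < 1)
    (hm : m.natAbs ≤ n) :
    qPochhammer q n * qBinomial q (2 * n) (n + m).toNat =
      qPochhammer q n * qPochhammer q (2 * n) /
        (qPochhammer q (n + m).toNat * qPochhammer q (n - m).toNat) := by
  have h := qPochhammer_mul_qPochhammer_mul_qBinomial q (n + m).toNat (n - m).toNat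
  rw [show (n + m).toNat + (n - m).toNat = 2 * n by omega] at h
  have := qPochhammer_pos hq0 hq1 (n + m).toNat
  have := qPochhammer_pos hq0 hq1 (n - m).toNat
  rw [eq_div_iff (by positivity)]
  linear_combination qPochhammer q n * h

lemma abs_qPochhammer_mul_qBinomial_le {n : ℕ} {m : ℤ} (hq0 : 0 ≤ q) (hq1 : q < 1)
    (hm : m.natAbs ≤ n) :
    |qPochhammer q n * qBinomial q (2 * n) (n + m).toNat| ≤
      ((∏' i : ℕ, (1 - q ^ (i + 1))) * ∏' i : ℕ, (1 - q ^ (i + 1)))⁻¹ := by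
  have hL := tprod_one_sub_pow_succ_pos hq0 hq1
  have hpos := qPochhammer_pos hq0 hq1
  have hle := tprod_one_sub_pow_succ_le_qPochhammer hq0 hq1
  rw [qPochhammer_mul_qBinomial_eq hq0 hq1 hm, inv_eq_one_div,
    abs_of_nonneg (div_pos (mul_pos (hpos _) (hpos _)) (mul_pos (hpos _) (hpos _))).le]
  exact div_le_div₀ zero_le_one
    (mul_le_one₀ (qPochhammer_le_one hq0 hq1 n) (hpos _).le (qPochhammer_le_one hq0 hq1 _))
    (by positivity) (mul_le_mul (hle _) (hle _) hL.le (hpos _).le)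

lemma tendsto_qPochhammer_mul_qBinomial (hq0 : 0 ≤ q) (hq1 : q < 1) (m : ℤ) :
    Tendsto (fun n : ℕ ↦ qPochhammer q n * qBinomial q (2 * n) (n + m).toNat)
      atTop (𝓝 1) := by
  set L := ∏' i : ℕ, (1 - q ^ (i + 1))
  have hL : L * L ≠ 0 := (mul_pos (tprod_one_sub_pow_succ_pos hq0 hq1)
    (tprod_one_sub_pow_succ_pos hq0 hq1)).ne'
  have hE := tendsto_qPochhammer hq0 hq1
  have hE_comp (f : ℕ → ℕ) (hf : ∀ n, n - m.natAbs ≤ f n) :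
      Tendsto (fun n ↦ qPochhammer q (f n)) atTop (𝓝 L) :=
    hE.comp <| tendsto_atTop_atTop.mpr fun b ↦
      ⟨b + m.natAbs, fun n hn ↦ by have := hf n; omega⟩
  have hlim := (hE.mul (hE_comp (2 * ·) (by omega))).div
    ((hE_comp (fun n ↦ (n + m).toNat) (by omega)).mul
      (hE_comp (fun n ↦ (n - m).toNat) (by omega))) hL
  rw [div_self hL] at hlim
  refine hlim.congr' ?_
  filter_upwards [eventually_ge_atTop m.natAbs] with n hn
  exact (qPochhammer_mul_qBinomial_eq hq0 hq1 hn).symm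

theorem tendsto_sum_Icc_qPochhammer_mul_qBinomial_mul (hq0 : 0 ≤ q) (hq1 : q < 1)
    {W : ℤ → ℝ} (hW : Summable W) :
    Tendsto (fun n : ℕ ↦ ∑ m ∈ Icc (-(n : ℤ)) n,
      qPochhammer q n * qBinomial q (2 * n) (n + m).toNat * W m) atTop (𝓝 (∑' m, W m)) := by
  set F : ℕ → ℤ → ℝ := fun n m ↦
    if m.natAbs ≤ n then qPochhammer q n * qBinomial q (2 * n) (n + m).toNat * W m else 0
  have hF (n : ℕ) : ∑' m, F n m =
      ∑ m ∈ Icc (-(n : ℤ)) n, qPochhammer q n * qBinomial q (2 * n) (n + m).toNat * W m := by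
    rw [tsum_eq_sum (s := Icc (-(n : ℤ)) n) fun m hm ↦ if_neg (by rw [mem_Icc] at hm; omega)]
    exact sum_congr rfl fun m hm ↦ if_pos (by rw [mem_Icc] at hm; omega)
  set L := ∏' i : ℕ, (1 - q ^ (i + 1))
  refine (tendsto_tsum_of_dominated_convergence (hW.abs.mul_left (L * L)⁻¹) (fun m ↦ ?_)
    (Eventually.of_forall fun n m ↦ ?_)).congr hF
  · simpa using ((tendsto_qPochhammer_mul_qBinomial hq0 hq1 m).mul_const (W m)).congr'
      ((eventually_ge_atTop m.natAbs).mono fun n hn ↦ (if_pos hn).symm)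
  · simp only [F]
    split_ifs with hm
    · rw [Real.norm_eq_abs, abs_mul]
      exact mul_le_mul_of_nonneg_right (abs_qPochhammer_mul_qBinomial_le hq0 hq1 hm)
        (abs_nonneg _)
    · rw [norm_zero]
      exact mul_nonneg (inv_nonneg.2 (mul_self_nonneg L)) (abs_nonneg _)

end Real

section Jacobi

variable {x z : ℝ}

lemma summable_zpow_sq_mul_zpow (hx0 : 0 < x) (hx1 : x < 1) (hz : 0 < z) :
    Summable fun m : ℤ ↦ x ^ (m ^ 2) * z ^ m := by
  -- `x ^ (m ^ 2) * z ^ m` is the norm of the `m`-th term of `θ(w, τ)` at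
  -- `τ = -i log x / π`, `w = -i log z / (2π)`
  have hτ : 0 < (Complex.I * ↑(-Real.log x / Real.pi)).im := by
    simpa using div_pos (neg_pos.2 (Real.log_neg hx0 hx1)) Real.pi_pos
  refine (summable_norm_iff.mpr ((summable_jacobiTheta₂_term_iff
    (Complex.I * ↑(-Real.log z / (2 * Real.pi))) _).mpr hτ)).congr fun m ↦ ?_
  rw [norm_jacobiTheta₂_term, ← Real.rpow_intCast, ← Real.rpow_intCast,
    Real.rpow_def_of_pos hx0, Real.rpow_def_of_pos hz, ← Real.exp_add]
  simp only [Complex.mul_im, Complex.I_re, Complex.I_im, Complex.ofReal_re, Complex.ofReal_im,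
    zero_mul, one_mul, Int.cast_pow]
  congr 1
  field_simp
  ring

lemma summable_pow_two_mul_add_one (hx0 : 0 < x) (hx1 : x < 1) (c : ℝ) :
    Summable fun i : ℕ ↦ x ^ (2 * i + 1) * c := by
  have hx2 : x ^ 2 < 1 := pow_lt_one₀ hx0.le hx1 two_ne_zero
  simpa [pow_succ, pow_mul, mul_assoc] using
    (summable_geometric_of_lt_one (by positivity) hx2).mul_right (x * c)

theorem hasProd_jacobi (hx0 : 0 < x) (hx1 : x < 1) (hz : 0 < z) :
    HasProd (fun i : ℕ ↦
      (1 - x ^ (2 * i + 2)) * (1 + x ^ (2 * i + 1) * z) * (1 + x ^ (2 * i + 1) / z))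
      (∑' m : ℤ, x ^ (m ^ 2) * z ^ m) := by
  have hq0 : 0 ≤ x ^ 2 := by positivity
  have hq1 : x ^ 2 < 1 := pow_lt_one₀ hx0.le hx1 two_ne_zero
  set f : ℕ → ℝ := fun i ↦
    (1 - (x ^ 2) ^ (i + 1)) * (1 + x ^ (2 * i + 1) * z) * (1 + x ^ (2 * i + 1) / z)
  have hf : (fun i : ℕ ↦
      (1 - x ^ (2 * i + 2)) * (1 + x ^ (2 * i + 1) * z) * (1 + x ^ (2 * i + 1) / z)) = f := by
    funext i
    ring
  have hmult : Multipliable f := by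
    simpa [f, div_eq_mul_inv] using ((multipliable_one_sub_pow_succ hq0 hq1).mul
      (Real.multipliable_one_add_of_summable (summable_pow_two_mul_add_one hx0 hx1 z))).mul
      (Real.multipliable_one_add_of_summable (summable_pow_two_mul_add_one hx0 hx1 z⁻¹))
  have hpartial (n : ℕ) : ∏ i ∈ range n, f i = ∑ m ∈ Icc (-(n : ℤ)) n,
      qPochhammer (x ^ 2) n * qBinomial (x ^ 2) (2 * n) (n + m).toNat * (x ^ (m ^ 2) * z ^ m) := by
    rw [prod_congr rfl fun i _ ↦ mul_assoc _ _ _, prod_mul_distrib,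
      prod_range_one_add_mul_one_add_div hx0.ne' hz.ne', mul_sum]
    exact sum_congr rfl fun m _ ↦ by rw [qPochhammer]; ring
  have hlim := tendsto_sum_Icc_qPochhammer_mul_qBinomial_mul hq0 hq1
    (summable_zpow_sq_mul_zpow hx0 hx1 hz)
  simp_rw [← hpartial] at hlim
  rw [hf, ← tendsto_nhds_unique hmult.hasProd.tendsto_prod_nat hlim]
  exact hmult.hasProd

end Jacobi

/-- **Jacobi triple product** (for reals): for `0 < X < 1` and `Y ≠ 0`, the infinite
product `∏_{i=1}^∞ (1 - X^{2i})(1 + X^{2i-1} Y^2)(1 + X^{2i-1}/Y^2)` converges, the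
two-sided series `∑_{j ∈ ℤ} X^{j^2} Y^{2j}` converges absolutely, and they are equal. -/
theorem jacobi_triple_product (X Y : ℝ) (hX0 : 0 < X) (hX1 : X < 1) (hY : Y ≠ 0) :
    Multipliable (fun i : ℕ =>
      (1 - X ^ (2 * i + 2)) * (1 + X ^ (2 * i + 1) * Y ^ 2) * (1 + X ^ (2 * i + 1) / Y ^ 2)) ∧
    Summable (fun j : ℤ => |X ^ (j ^ 2) * Y ^ (2 * j)|) ∧
    (∏' i : ℕ,
      (1 - X ^ (2 * i + 2)) * (1 + X ^ (2 * i + 1) * Y ^ 2) * (1 + X ^ (2 * i + 1) / Y ^ 2))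
      = ∑' j : ℤ, X ^ (j ^ 2) * Y ^ (2 * j) := by
  have hY2 : 0 < Y ^ 2 := by positivity
  have hzpow (j : ℤ) : Y ^ (2 * j) = (Y ^ 2) ^ j := by rw [zpow_mul]; norm_cast
  have hprod := hasProd_jacobi hX0 hX1 hY2
  simp_rw [hzpow]
  exact ⟨hprod.multipliable, (summable_zpow_sq_mul_zpow hX0 hX1 hY2).abs, hprod.tprod_eq⟩
end

section
/- The blocking weights sum to one over H: the family (η ↦ w^c(η)) indexed by the countable set H is summable and ∑_{η ∈ H} w^c(η) = 1. -/
/- ASEP configurations are functions `η : ℤ → {0,1}`, encoded as `η : ℤ → ℕ` with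
values at most `1`. Throughout, `p ∈ (1/2, 1)` is the right jump rate, `q = 1 - p`,
and `c ∈ ℝ` parametrizes the blocking measure. -/

/-- `N_p(η) = ∑_{i ≤ 0} η_i`. -/
noncomputable def exNp (η : ℤ → ℕ) : ℕ := ∑ᶠ m ∈ {m : ℤ | m ≤ 0}, η m

/-- `N_h(η) = ∑_{i ≥ 1} (1 - η_i)`. -/
noncomputable def exNh (η : ℤ → ℕ) : ℕ := ∑ᶠ m ∈ {m : ℤ | 1 ≤ m}, (1 - η m)

/-- Membership in `H`: a `{0,1}`-valued configuration with `N_p(η) < ∞` and `N_h(η) < ∞`. -/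
def memH (η : ℤ → ℕ) : Prop :=
  (∀ m, η m ≤ 1) ∧ {m : ℤ | m ≤ 0 ∧ η m = 1}.Finite ∧ {m : ℤ | 1 ≤ m ∧ η m = 0}.Finite

/-- The conserved quantity `N(η) = N_h(η) - N_p(η)`. -/
noncomputable def exN (η : ℤ → ℕ) : ℤ := (exNh η : ℤ) - (exNp η : ℤ)

/-- The Bernoulli parameter `ρ_i = e^c (p/q)^i / (1 + e^c (p/q)^i)`, with `q = 1 - p`. -/
noncomputable def rho (p c : ℝ) (i : ℤ) : ℝ :=
  Real.exp c * (p / (1 - p)) ^ i / (1 + Real.exp c * (p / (1 - p)) ^ i)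

/-- The `i`-th factor of the blocking weight: `ρ_i` if `η_i = 1`, else `1 - ρ_i`. -/
noncomputable def wFactor (p c : ℝ) (η : ℤ → ℕ) (i : ℤ) : ℝ :=
  if η i = 1 then rho p c i else 1 - rho p c i

/-- The blocking weight `w^c(η) = ∏_{i ∈ ℤ} (ρ_i if η_i = 1 else 1 - ρ_i)`. -/
noncomputable def wBlock (p c : ℝ) (η : ℤ → ℕ) : ℝ := ∏' i : ℤ, wFactor p c η i

/-!
Call a site a *defect* of `η` if it is an occupied site `i ≤ 0` or an empty site `i ≥ 1`;
`η ↦ {defects of η}` identifies `H` with the finite subsets of `ℤ`. With `a_i = e^c (p/q)^i`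
(so `ρ_i = a_i / (1 + a_i)`) put `d_i = a_i` for `i ≤ 0` and `d_i = a_i⁻¹` for `i ≥ 1`. Each
factor of the weight is `d_i / (1 + d_i)` at a defect and `1 / (1 + d_i)` elsewhere, so the
configuration with defect set `S` has weight `(∏_{i ∈ S} d_i) / ∏_i (1 + d_i)`. Since `p/q > 1`,
`d_i` decays geometrically in `|i|`, and expanding `∏_i (1 + d_i) = ∑_S ∏_{i ∈ S} d_i` gives
total weight one.
-/

open Finset

section ProductBernoulli

variable {ι : Type*} {f : ι → ℝ}

theorem hasSum_prod_finset_of_nonneg (hf0 : ∀ i, 0 ≤ f i) (hf : Summable f) :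
    HasSum (fun s : Finset ι => ∏ i ∈ s, f i) (∏' i, (1 + f i)) := by
  have hs := summable_finsetProd_of_summable_nonneg hf0 hf
  rw [tprod_one_add hs]
  exact hs.hasSum

theorem hasSum_tprod_ite_div_one_add [DecidableEq ι] (hf0 : ∀ i, 0 ≤ f i) (hf : Summable f) :
    HasSum (fun s : Finset ι => ∏' i, (if i ∈ s then f i else 1) / (1 + f i)) 1 := by
  set P := ∏' i, (1 + f i)
  have hP : P ≠ 0 := tprod_one_add_ne_zero_of_summable
    (fun i => by linarith [hf0 i]) (by simpa [abs_of_nonneg (hf0 _)] using hf)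
  have hinv : HasProd (fun i => (1 + f i)⁻¹) P⁻¹ :=
    (Real.multipliable_one_add_of_summable hf).hasProd.inv₀ hP
  have hterm (s : Finset ι) :
      ∏' i, (if i ∈ s then f i else 1) / (1 + f i) = (∏ i ∈ s, f i) * P⁻¹ := by
    simp_rw [div_eq_mul_inv]
    rw [((hasProd_prod_of_ne_finset_one fun i hi => if_neg hi).mul hinv).tprod_eq,
      prod_ite_mem, inter_self]
  simp_rw [hterm]
  rw [← mul_inv_cancel₀ hP]
  exact (hasSum_prod_finset_of_nonneg hf0 hf).mul_right P⁻¹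

end ProductBernoulli

noncomputable def blockingOdds (p c : ℝ) (i : ℤ) : ℝ := Real.exp c * (p / (1 - p)) ^ i

noncomputable def defectOdds (p c : ℝ) (i : ℤ) : ℝ :=
  if i ≤ 0 then blockingOdds p c i else (blockingOdds p c i)⁻¹

/-- The configuration that differs from the step configuration `𝟙_{i ≥ 1}` exactly on `S`. -/
def ofDefects (S : Finset ℤ) : ℤ → ℕ := fun i => if (i ∈ S ↔ i ≤ 0) then 1 else 0

section Odds

variable {p : ℝ} (c : ℝ)

lemma blockingOdds_pos (hp0 : 0 < p) (hp1 : p < 1) (i : ℤ) : 0 < blockingOdds p c i := by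
  have : 0 < p / (1 - p) := div_pos hp0 (by linarith)
  unfold blockingOdds
  positivity

lemma defectOdds_nonneg (hp0 : 0 < p) (hp1 : p < 1) (i : ℤ) : 0 ≤ defectOdds p c i := by
  have := blockingOdds_pos c hp0 hp1 i
  unfold defectOdds
  split_ifs <;> positivity

lemma summable_defectOdds (hp : 1 / 2 < p) (hp1 : p < 1) : Summable (defectOdds p c) := by
  set r := p / (1 - p)
  have hr : 1 < r := by rw [lt_div_iff₀ (by linarith)]; linarith
  have hgeom (C : ℝ) : Summable fun n : ℕ => C * r⁻¹ ^ (n + 1) :=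
    (summable_nat_add_iff 1).2 <|
      (summable_geometric_of_lt_one (by positivity) (inv_lt_one_of_one_lt₀ hr)).mul_left C
  refine .of_add_one_of_neg_add_one ?_ ?_
  · convert hgeom (Real.exp (-c)) using 2 with n
    rw [defectOdds, if_neg (by omega), blockingOdds, mul_inv, ← Real.exp_neg, ← inv_zpow]
    norm_cast
  · convert hgeom (Real.exp c) using 2 with n
    rw [defectOdds, if_pos (by omega), blockingOdds, zpow_neg, ← inv_zpow]
    norm_cast

lemma wFactor_ofDefects (hp0 : 0 < p) (hp1 : p < 1) (S : Finset ℤ) (i : ℤ) :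
    wFactor p c (ofDefects S) i =
      (if i ∈ S then defectOdds p c i else 1) / (1 + defectOdds p c i) := by
  have ha := blockingOdds_pos c hp0 hp1 i
  have hrho : rho p c i = blockingOdds p c i / (1 + blockingOdds p c i) := rfl
  by_cases h0 : i ≤ 0 <;> by_cases hS : i ∈ S <;>
    simp [wFactor, ofDefects, defectOdds, hrho, h0, hS] <;> field_simp <;> ring

end Odds

lemma memH_iff {η : ℤ → ℕ} :
    memH η ↔ (∀ m, η m ≤ 1) ∧ {m : ℤ | η m = 1 ↔ m ≤ 0}.Finite := by
  refine and_congr_right fun h01 => ?_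
  have : {m : ℤ | η m = 1 ↔ m ≤ 0} = {m | m ≤ 0 ∧ η m = 1} ∪ {m | 1 ≤ m ∧ η m = 0} := by
    ext m
    have := h01 m
    simp only [Set.mem_ofPred_eq, Set.mem_union]
    omega
  rw [this, Set.finite_union]

lemma ofDefects_eq_one_iff {S : Finset ℤ} {i : ℤ} : ofDefects S i = 1 ↔ (i ∈ S ↔ i ≤ 0) := by
  unfold ofDefects
  split_ifs <;> simp_all

lemma memH_ofDefects (S : Finset ℤ) : memH (ofDefects S) := by
  refine memH_iff.2 ⟨fun m => by unfold ofDefects; split_ifs <;> omega, ?_⟩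
  refine S.finite_toSet.subset fun m hm => ?_
  simp only [Set.mem_ofPred_eq, ofDefects_eq_one_iff] at hm
  exact Finset.mem_coe.2 (by tauto)

noncomputable def defectEquiv : Finset ℤ ≃ {η : ℤ → ℕ // memH η} where
  toFun S := ⟨ofDefects S, memH_ofDefects S⟩
  invFun η := (memH_iff.1 η.2).2.toFinset
  left_inv S := by
    ext i
    simp only [Set.Finite.mem_toFinset, Set.mem_ofPred_eq, ofDefects_eq_one_iff]
    tauto
  right_inv η := by
    refine Subtype.ext (funext fun i => ?_)
    have := η.2.1 i
    simp only [Set.Finite.mem_toFinset, Set.mem_ofPred_eq, ofDefects]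
    split_ifs <;> omega

/-- The blocking weights sum to one over the countable set `H`. -/
theorem wBlock_sums_to_one (p c : ℝ) (hp : 1 / 2 < p) (hp1 : p < 1) :
    Summable (fun η : {η : ℤ → ℕ // memH η} => wBlock p c η.1) ∧
    ∑' η : {η : ℤ → ℕ // memH η}, wBlock p c η.1 = 1 := by
  have hp0 : 0 < p := by linarith
  have hH : HasSum (fun η : {η : ℤ → ℕ // memH η} => wBlock p c η.1) 1 := by
    rw [← defectEquiv.hasSum_iff]
    convert hasSum_tprod_ite_div_one_add (defectOdds_nonneg c hp0 hp1)
      (summable_defectOdds c hp hp1) using 2 with S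
    exact tprod_congr (wFactor_ofDefects c hp0 hp1 S)
  exact ⟨hH.summable, hH.tsum_eq⟩
end

section
/- The product Bernoulli blocking measure concentrates on H: letting B_i be the probability measure on {0,1} with B_i({1}) = ρ_i and B_i({0}) = 1 − ρ_i, the infinite product probability measure ⊗_{i ∈ ℤ} B_i on {0,1}^ℤ assigns probability 1 to the set of configurations η such that η_i = 1 for only finitely many i ≤ 0 and η_i = 0 for only finitely many i ≥ 1 (i.e., almost every configuration lies in H). -/
open MeasureTheory

/-!
Compare a configuration with the ground state, which has holes at every `i ≤ 0` and particles at
every `i ≥ 1`. Since `ρ_i ≤ e^c (p/q)^i` and `1 - ρ_i ≤ e^{-c} (p/q)^{-i}`, the probability that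
site `i` differs from the ground state decays like `(q/p)^{|i|}`, which is summable over `ℤ`
because `p > q`. By the first Borel–Cantelli lemma almost every configuration differs from the
ground state at only finitely many sites, and those are exactly the configurations in `H`.
-/

def groundState (i : ℤ) : Bool := decide (1 ≤ i)

def defectProb (π : ℤ → ℝ) (i : ℤ) : ℝ := if 1 ≤ i then 1 - π i else π i

lemma setOf_ne_groundState_eq (η : ℤ → Bool) :
    {i | η i ≠ groundState i} = {i | i ≤ 0 ∧ η i = true} ∪ {i | 1 ≤ i ∧ η i = false} := by
  ext i
  simp only [groundState, Set.mem_ofPred_eq, Set.mem_union]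
  cases η i <;> grind

lemma measure_setOf_ne_groundState {P : Measure (ℤ → Bool)} {π : ℤ → ℝ}
    (hP : ∀ (s : Finset ℤ) (v : ℤ → Bool), P {η | ∀ i ∈ s, η i = v i} =
      ∏ i ∈ s, ENNReal.ofReal (if v i then π i else 1 - π i)) (i : ℤ) :
    P {η | η i ≠ groundState i} = ENNReal.ofReal (defectProb π i) := by
  have h := hP {i} fun _ ↦ !groundState i
  by_cases hi : 1 ≤ i <;> simpa [groundState, defectProb, hi] using h

lemma summable_int_pow_natAbs {t : ℝ} (h0 : 0 ≤ t) (h1 : t < 1) :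
    Summable fun i : ℤ ↦ t ^ i.natAbs :=
  .of_nat_of_neg (by simpa using summable_geometric_of_lt_one h0 h1)
    (by simpa using summable_geometric_of_lt_one h0 h1)

section rho

variable {p : ℝ} (c : ℝ)

lemma rho_nonneg (hr : 0 < p / (1 - p)) (i : ℤ) : 0 ≤ rho p c i := by
  unfold rho; positivity

lemma rho_le (hr : 0 < p / (1 - p)) (i : ℤ) : rho p c i ≤ Real.exp c * (p / (1 - p)) ^ i := by
  unfold rho
  exact div_le_self (by positivity) (le_add_of_nonneg_right (by positivity))

lemma one_sub_rho_eq (hr : 0 < p / (1 - p)) (i : ℤ) :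
    1 - rho p c i = (1 + Real.exp c * (p / (1 - p)) ^ i)⁻¹ := by
  unfold rho
  field_simp
  ring

lemma one_sub_rho_nonneg (hr : 0 < p / (1 - p)) (i : ℤ) : 0 ≤ 1 - rho p c i := by
  rw [one_sub_rho_eq c hr]; positivity

lemma one_sub_rho_le (hr : 0 < p / (1 - p)) (i : ℤ) :
    1 - rho p c i ≤ Real.exp (-c) * (p / (1 - p)) ^ (-i) := by
  rw [one_sub_rho_eq c hr, Real.exp_neg, zpow_neg, ← mul_inv]
  exact inv_anti₀ (by positivity) (le_add_of_nonneg_left zero_le_one)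

lemma defectProb_rho_le (hr : 1 < p / (1 - p)) (i : ℤ) :
    defectProb (rho p c) i ≤ (Real.exp c + Real.exp (-c)) * (p / (1 - p))⁻¹ ^ i.natAbs := by
  have hr0 : 0 < p / (1 - p) := zero_lt_one.trans hr
  unfold defectProb
  split_ifs with hi
  · obtain ⟨n, rfl⟩ : ∃ n : ℕ, i = n := ⟨i.natAbs, by omega⟩
    calc 1 - rho p c n ≤ Real.exp (-c) * (p / (1 - p)) ^ (-(n : ℤ)) := one_sub_rho_le c hr0 n
      _ = Real.exp (-c) * (p / (1 - p))⁻¹ ^ n := by rw [zpow_neg, zpow_natCast, inv_pow]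
      _ ≤ _ := by
        rw [Int.natAbs_natCast]
        gcongr; exact le_add_of_nonneg_left (Real.exp_nonneg c)
  · obtain ⟨n, rfl⟩ : ∃ n : ℕ, i = -n := ⟨i.natAbs, by omega⟩
    calc rho p c (-n) ≤ Real.exp c * (p / (1 - p)) ^ (-(n : ℤ)) := rho_le c hr0 _
      _ = Real.exp c * (p / (1 - p))⁻¹ ^ n := by rw [zpow_neg, zpow_natCast, inv_pow]
      _ ≤ _ := by
        rw [Int.natAbs_neg, Int.natAbs_natCast]
        gcongr; exact le_add_of_nonneg_right (Real.exp_nonneg (-c))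

lemma summable_defectProb_rho (hr : 1 < p / (1 - p)) : Summable (defectProb (rho p c)) := by
  have hr0 : 0 < p / (1 - p) := zero_lt_one.trans hr
  refine .of_nonneg_of_le (fun i ↦ ?_) (defectProb_rho_le c hr)
    ((summable_int_pow_natAbs (inv_nonneg.2 hr0.le) (inv_lt_one_of_one_lt₀ hr)).mul_left _)
  unfold defectProb
  split_ifs
  exacts [one_sub_rho_nonneg c hr0 i, rho_nonneg c hr0 i]

end rho

/-- The product Bernoulli blocking measure concentrates on `H`: if `P` is the product
`⊗_{i ∈ ℤ} Bernoulli(ρ_i)` on `{0,1}^ℤ` — i.e. a probability measure on `ℤ → Bool` giving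
every cylinder set its product probability — then `P`-almost every configuration `η` has
`η_i = 1` for only finitely many `i ≤ 0` and `η_i = 0` for only finitely many `i ≥ 1`,
that is, `P(H) = 1`. -/
theorem product_blocking_measure_concentrates_on_H (p c : ℝ) (hp : 1 / 2 < p) (hp1 : p < 1)
    (P : Measure (ℤ → Bool)) [IsProbabilityMeasure P]
    (hP : ∀ (s : Finset ℤ) (v : ℤ → Bool),
      P {η : ℤ → Bool | ∀ i ∈ s, η i = v i} =
        ∏ i ∈ s, ENNReal.ofReal (if v i then rho p c i else 1 - rho p c i)) :
    P {η : ℤ → Bool |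
        {i : ℤ | i ≤ 0 ∧ η i = true}.Finite ∧ {i : ℤ | 1 ≤ i ∧ η i = false}.Finite} = 1 := by
  have hr : 1 < p / (1 - p) := by rw [lt_div_iff₀ (by linarith)]; linarith
  have hfinite : ∀ᵐ η ∂P, {i | η i ≠ groundState i}.Finite :=
    ae_finite_setOfPred_mem (s := fun i ↦ {η : ℤ → Bool | η i ≠ groundState i}) <|
      (tsum_congr (measure_setOf_ne_groundState hP)).trans_ne
        (summable_defectProb_rho c hr).tsum_ofReal_ne_top
  simp_rw [← Set.finite_union, ← setOf_ne_groundState_eq]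
  exact (measure_congr (ae_eq_univ.2 (ae_iff.1 hfinite))).trans measure_univ
end

section
/- Shift formula for the blocking weight (ASEP case of Lemma 5.2): for every η ∈ H and every j ∈ ℤ, w^c(τ^j η) = (q/p)^{(j² − j)/2 − N(η)·j} · e^{c·j} · w^c(η). -/
/- With `g_i = e^c (p/q)^i` (`odds`) the `i`-th factor of `w^c(η)` is `g_i^{η_i} / (1 + g_i)`.
Hence the weight of `η ∈ H` is the weight of the step configuration `𝟙{i ≥ 1}` (`ground`, whose
weight converges because `p > q`) times the finite product `∏ g_i^{η_i - 𝟙{i ≥ 1}}` (exponents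
`excess η`). Shifting `η` by one site replaces `g_i` by `g_{i-1} = (q/p) g_i` and moves the step
by one site, so the finite product gains the factor `e^c (p/q)^{N(η)}` while `N` drops by one;
iterating produces the quadratic exponent. -/

open Function Set

lemma mulSupport_fun_zpow_subset {α G : Type*} [DivInvMonoid G] (a : α → G) (e : α → ℤ) :
    mulSupport (fun i => a i ^ e i) ⊆ support e := fun i hi => by
  contrapose! hi
  simp_all

lemma finprod_zpow_eq_zpow_finsum {α G : Type*} [CommGroupWithZero G] {a : G} (ha : a ≠ 0)
    {e : α → ℤ} (he : e.HasFiniteSupport) : ∏ᶠ i, a ^ e i = a ^ ∑ᶠ i, e i := by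
  classical
  have hsub : support e ⊆ he.toFinset := he.coe_toFinset.ge
  rw [finprod_eq_prod_of_mulSupport_subset _ ((mulSupport_fun_zpow_subset _ e).trans hsub),
    finsum_eq_sum_of_support_subset _ hsub]
  induction he.toFinset using Finset.induction_on with
  | empty => simp
  | insert i s hi ih => rw [Finset.prod_insert hi, Finset.sum_insert hi, zpow_add₀ ha, ih]

namespace BlockingMeasure

noncomputable def odds (p c : ℝ) (i : ℤ) : ℝ := Real.exp c * (p / (1 - p)) ^ i

def ground (i : ℤ) : ℕ := if 1 ≤ i then 1 else 0

def excess (η : ℤ → ℕ) (i : ℤ) : ℤ := η i - ground i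

variable {p c : ℝ}

lemma rho_eq (i : ℤ) : rho p c i = odds p c i / (1 + odds p c i) := rfl

lemma odds_pos (hr : 0 < p / (1 - p)) (i : ℤ) : 0 < odds p c i := by
  unfold odds; positivity

lemma odds_zero : odds p c 0 = Real.exp c := by simp [odds]

lemma odds_sub_one (hr : 0 < p / (1 - p)) (i : ℤ) :
    odds p c (i - 1) = (p / (1 - p))⁻¹ * odds p c i := by
  rw [odds, odds, zpow_sub_one₀ hr.ne']; ring

lemma wFactor_eq_pow_div (hr : 0 < p / (1 - p)) {η : ℤ → ℕ} {i : ℤ} (hη : η i ≤ 1) :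
    wFactor p c η i = odds p c i ^ η i / (1 + odds p c i) := by
  have := odds_pos (c := c) hr i
  rcases Nat.le_one_iff_eq_zero_or_eq_one.mp hη with h | h
  · rw [wFactor, if_neg (by omega), rho_eq, h, pow_zero]
    field_simp
    ring
  · rw [wFactor, if_pos h, rho_eq, h, pow_one]

lemma wFactor_eq_zpow_excess_mul (hr : 0 < p / (1 - p)) {η : ℤ → ℕ} {i : ℤ} (hη : η i ≤ 1) :
    wFactor p c η i = odds p c i ^ excess η i * wFactor p c ground i := by
  have := odds_pos (c := c) hr i
  rw [wFactor_eq_pow_div hr hη, wFactor_eq_pow_div hr (by unfold ground; split_ifs <;> simp),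
    excess, zpow_sub₀ this.ne', zpow_natCast, zpow_natCast]
  field_simp

lemma summable_one_sub_rho_nat (hr : 1 < p / (1 - p)) :
    Summable fun n : ℕ => 1 - rho p c n := by
  have hr0 : 0 < p / (1 - p) := one_pos.trans hr
  refine ((summable_geometric_of_lt_one (by positivity) (inv_lt_one_of_one_lt₀ hr)).mul_left
    (Real.exp (-c))).of_nonneg_of_le (fun n => ?_) (fun n => ?_)
  · rw [rho_eq, sub_nonneg, div_le_one (by linarith [odds_pos (c := c) hr0 n])]
    linarith
  · have h := odds_pos (c := c) hr0 n
    calc 1 - rho p c n = 1 / (1 + odds p c n) := by rw [rho_eq]; field_simp; ring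
      _ ≤ 1 / odds p c n := one_div_le_one_div_of_le h (by linarith)
      _ = Real.exp (-c) * (p / (1 - p))⁻¹ ^ n := by
        rw [odds, Real.exp_neg, zpow_natCast, inv_pow]; field_simp

lemma summable_rho_neg_nat (hr : 1 < p / (1 - p)) :
    Summable fun n : ℕ => rho p c (-n) := by
  have hr0 : 0 < p / (1 - p) := one_pos.trans hr
  refine ((summable_geometric_of_lt_one (by positivity) (inv_lt_one_of_one_lt₀ hr)).mul_left
    (Real.exp c)).of_nonneg_of_le (fun n => ?_) (fun n => ?_)
  · have := odds_pos (c := c) hr0 (-n)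
    rw [rho_eq]; positivity
  · have h := odds_pos (c := c) hr0 (-n)
    calc rho p c (-n) ≤ odds p c (-n) := by
          rw [rho_eq]; exact div_le_self h.le (by linarith)
      _ = Real.exp c * (p / (1 - p))⁻¹ ^ n := by rw [odds, zpow_neg, zpow_natCast, inv_pow]

lemma multipliable_wFactor_ground (hr : 1 < p / (1 - p)) :
    Multipliable (wFactor p c ground) := by
  have hsum : Summable fun i => wFactor p c ground i - 1 := by
    rw [summable_int_iff_summable_nat_and_neg]
    constructor
    · rw [← summable_nat_add_iff 1]
      convert ((summable_nat_add_iff 1).mpr (summable_one_sub_rho_nat (c := c) hr)).neg using 2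
      simp [wFactor, ground]
    · convert (summable_rho_neg_nat (c := c) hr).neg using 2 with n
      simp [wFactor, ground, show ¬ (1 : ℤ) ≤ -n by omega]
  simpa using Real.multipliable_one_add_of_summable hsum

lemma hasFiniteSupport_excess {η : ℤ → ℕ} (hη : memH η) : (excess η).HasFiniteSupport := by
  refine (hη.2.1.union hη.2.2).subset fun i hi => ?_
  have := hη.1 i
  simp only [mem_support, excess, ground] at hi
  split_ifs at hi with h <;> simp only [mem_union, mem_ofPred_eq] <;> omega

lemma finsum_excess {η : ℤ → ℕ} (hη : memH η) : ∑ᶠ i, excess η i = -exN η := by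
  have hp : (exNp η : ℤ) = ∑ᶠ i ∈ {i : ℤ | i ≤ 0}, excess η i := by
    have hfin : ({i : ℤ | i ≤ 0} ∩ support η).Finite := hη.2.1.subset fun i ⟨hi, hs⟩ =>
      ⟨hi, by have := hη.1 i; simp only [mem_support] at hs; omega⟩
    rw [exNp, ← Nat.coe_castAddMonoidHom, (Nat.castAddMonoidHom ℤ).map_finsum_mem' hfin]
    refine finsum_mem_congr rfl fun i hi => ?_
    simp [excess, ground, show ¬ 1 ≤ i from by simp at hi; omega]
  have hh : -(exNh η : ℤ) = ∑ᶠ i ∈ {i : ℤ | 1 ≤ i}, excess η i := by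
    have hfin : ({i : ℤ | 1 ≤ i} ∩ support fun i => 1 - η i).Finite :=
      hη.2.2.subset fun i ⟨hi, hs⟩ => ⟨hi, by simp only [mem_support] at hs; omega⟩
    have hcast := (-Nat.castAddMonoidHom ℤ).map_finsum_mem' hfin
    simp only [AddMonoidHom.neg_apply, Nat.coe_castAddMonoidHom] at hcast
    rw [exNh, hcast]
    refine finsum_mem_congr rfl fun i hi => ?_
    have := hη.1 i
    simp only [mem_ofPred_eq] at hi
    simp [excess, ground, hi]
    omega
  have hcompl : univ \ {i : ℤ | i ≤ 0} = {i | 1 ≤ i} := by ext; simp; omega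
  rw [← finsum_mem_univ, ← finsum_mem_inter_add_sdiff' {i : ℤ | i ≤ 0}
    (Set.Finite.subset (hasFiniteSupport_excess hη) inter_subset_right), univ_inter, hcompl,
    ← hp, ← hh, exN]
  ring

lemma wBlock_eq_finprod_mul_wBlock_ground (hr : 1 < p / (1 - p)) {η : ℤ → ℕ} (hη : memH η) :
    wBlock p c η = (∏ᶠ i, odds p c i ^ excess η i) * wBlock p c ground := by
  have hfin : HasFiniteMulSupport fun i => odds p c i ^ excess η i :=
    (hasFiniteSupport_excess hη).subset (mulSupport_fun_zpow_subset _ _)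
  rw [wBlock, wBlock, ← tprod_eq_finprod (L := SummationFilter.unconditional ℤ) hfin,
    ← (multipliable_of_hasFiniteMulSupport hfin).tprod_mul (multipliable_wFactor_ground hr)]
  exact tprod_congr fun i => wFactor_eq_zpow_excess_mul (one_pos.trans hr) (hη.1 i)

lemma excess_shift_one (η : ℤ → ℕ) (i : ℤ) :
    excess (fun k => η (k + 1)) i = excess η (i + 1) + if i = 0 then 1 else 0 := by
  simp only [excess, ground]
  split_ifs <;> omega

lemma finprod_odds_zpow_excess_shift_one (hr : 0 < p / (1 - p)) {η : ℤ → ℕ}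
    (he : (excess η).HasFiniteSupport) :
    ∏ᶠ i, odds p c i ^ excess (fun k => η (k + 1)) i =
      Real.exp c * (p / (1 - p)) ^ (-∑ᶠ i, excess η i) * ∏ᶠ i, odds p c i ^ excess η i := by
  set r := p / (1 - p)
  have h1 : HasFiniteMulSupport fun k : ℤ =>
      odds p c (k - 1) ^ (if k - 1 = 0 then 1 else 0 : ℤ) :=
    (finite_singleton 1).subset <| (mulSupport_fun_zpow_subset _ _).trans fun k hk => by
      simp only [mem_support, ne_eq, ite_eq_right_iff, one_ne_zero, imp_false,
        Decidable.not_not] at hk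
      simp only [mem_singleton_iff]; omega
  have h2 : HasFiniteMulSupport fun k => r⁻¹ ^ excess η k :=
    he.subset (mulSupport_fun_zpow_subset _ _)
  have h3 : HasFiniteMulSupport fun k => odds p c k ^ excess η k :=
    he.subset (mulSupport_fun_zpow_subset _ _)
  calc ∏ᶠ i, odds p c i ^ excess (fun k => η (k + 1)) i
      = ∏ᶠ k, odds p c (k - 1) ^ excess (fun k => η (k + 1)) (k - 1) :=
        (finprod_comp_equiv (Equiv.subRight 1)).symm
    _ = ∏ᶠ k, (odds p c (k - 1) ^ (if k - 1 = 0 then 1 else 0 : ℤ) *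
          (r⁻¹ ^ excess η k * odds p c k ^ excess η k)) := finprod_congr fun k => by
        rw [excess_shift_one, sub_add_cancel, zpow_add₀ (odds_pos hr _).ne', odds_sub_one hr k,
          mul_zpow]
        ring
    _ = odds p c 0 * (r⁻¹ ^ (∑ᶠ k, excess η k) * ∏ᶠ k, odds p c k ^ excess η k) := by
        rw [finprod_mul_distrib (g := fun k => r⁻¹ ^ excess η k * odds p c k ^ excess η k) h1
          (h2.mul h3), finprod_mul_distrib h2 h3,
          finprod_zpow_eq_zpow_finsum (inv_ne_zero hr.ne') he,
          finprod_eq_single _ 1 fun k hk => by simp [sub_eq_zero, hk]]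
        simp
    _ = _ := by rw [odds_zero, inv_zpow', mul_assoc]

lemma finsum_excess_shift_one {η : ℤ → ℕ} (he : (excess η).HasFiniteSupport) :
    ∑ᶠ i, excess (fun k => η (k + 1)) i = ∑ᶠ i, excess η i + 1 := by
  have h1 : HasFiniteSupport fun i => excess η (i + 1) :=
    he.comp_of_injective (add_left_injective 1)
  have h2 : HasFiniteSupport fun i : ℤ => (if i = 0 then 1 else 0 : ℤ) :=
    (finite_singleton 0).subset fun i hi => by simpa using hi
  simp_rw [excess_shift_one]
  rw [finsum_add_distrib h1 h2, finsum_eq_single _ 0 fun i hi => if_neg hi, if_pos rfl,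
    ← finsum_comp_equiv (Equiv.addRight 1) (f := excess η)]
  rfl

lemma memH_shift {η : ℤ → ℕ} (hη : memH η) (j : ℤ) : memH fun i => η (i + j) := by
  obtain ⟨hle, hp, hh⟩ := hη
  refine ⟨fun i => hle _, ?_, ?_⟩
  · refine ((hp.preimage (add_left_injective j).injOn).union (finite_Icc (1 - j) 0)).subset ?_
    rintro i ⟨hi, hη⟩
    by_cases h : i + j ≤ 0
    · exact Or.inl ⟨h, hη⟩
    · exact Or.inr ⟨by omega, hi⟩
  · refine ((hh.preimage (add_left_injective j).injOn).union (finite_Icc 1 (-j))).subset ?_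
    rintro i ⟨hi, hη⟩
    by_cases h : 1 ≤ i + j
    · exact Or.inl ⟨h, hη⟩
    · exact Or.inr ⟨hi, by omega⟩

lemma exN_shift_one {η : ℤ → ℕ} (hη : memH η) : exN (fun k => η (k + 1)) = exN η - 1 := by
  have h := finsum_excess_shift_one (hasFiniteSupport_excess hη)
  rw [finsum_excess (memH_shift hη 1), finsum_excess hη] at h
  omega

lemma wBlock_shift_one (hr : 1 < p / (1 - p)) {η : ℤ → ℕ} (hη : memH η) :
    wBlock p c (fun k => η (k + 1)) = Real.exp c * (p / (1 - p)) ^ exN η * wBlock p c η := by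
  rw [wBlock_eq_finprod_mul_wBlock_ground hr (memH_shift hη 1),
    wBlock_eq_finprod_mul_wBlock_ground hr hη,
    finprod_odds_zpow_excess_shift_one (one_pos.trans hr) (hasFiniteSupport_excess hη),
    finsum_excess hη, neg_neg, mul_assoc]

noncomputable def shiftFactor (p c : ℝ) (N j : ℤ) : ℝ :=
  ((1 - p) / p) ^ ((j ^ 2 - j) / 2 - N * j) * Real.exp (c * j)

lemma shiftFactor_add_one (hr : p / (1 - p) ≠ 0) (N j : ℤ) :
    shiftFactor p c N (j + 1) = shiftFactor p c (N - 1) j * (Real.exp c * (p / (1 - p)) ^ N) := by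
  have hexp : ((j + 1) ^ 2 - (j + 1)) / 2 - N * (j + 1) = (j ^ 2 - j) / 2 - (N - 1) * j + -N := by
    rw [show (j + 1) ^ 2 - (j + 1) = j ^ 2 - j + j * 2 by ring,
      Int.add_mul_ediv_right _ _ two_ne_zero]
    ring
  rw [shiftFactor, shiftFactor, hexp, ← inv_div, inv_zpow', inv_zpow', neg_add, neg_neg,
    zpow_add₀ hr]
  push_cast
  rw [mul_add_one, Real.exp_add]
  ring

lemma wBlock_shift_eq_shiftFactor_mul (hr : 1 < p / (1 - p)) {η : ℤ → ℕ} (hη : memH η)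
    (j : ℤ) :
    wBlock p c (fun i => η (i + j)) = shiftFactor p c (exN η) j * wBlock p c η := by
  have hr0 : p / (1 - p) ≠ 0 := (one_pos.trans hr).ne'
  induction j using Int.induction_on generalizing η with
  | zero => simp [shiftFactor]
  | succ j ih =>
    calc wBlock p c (fun i => η (i + (j + 1))) = wBlock p c (fun i => η (i + j + 1)) := by
          simp only [add_assoc]
      _ = shiftFactor p c (exN η - 1) j * wBlock p c (fun i => η (i + 1)) := by
          rw [← exN_shift_one hη]; exact ih (memH_shift hη 1)
      _ = shiftFactor p c (exN η) (j + 1) * wBlock p c η := by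
          rw [wBlock_shift_one hr hη, shiftFactor_add_one hr0]; ring
  | pred j ih =>
    set η' : ℤ → ℕ := fun i => η (i - 1)
    have hη' : memH η' := by simpa [η', sub_eq_add_neg] using memH_shift hη (-1)
    have hτ : (fun i => η' (i + 1)) = η := by simp [η']
    have hN : exN η' = exN η + 1 := by
      have := exN_shift_one hη'
      rw [hτ] at this
      omega
    have hw : wBlock p c η = Real.exp c * (p / (1 - p)) ^ (exN η + 1) * wBlock p c η' := by
      rw [← hN, ← wBlock_shift_one hr hη', hτ]
    have hS := shiftFactor_add_one (c := c) hr0 (exN η + 1) (-j - 1)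
    rw [sub_add_cancel, add_sub_cancel_right] at hS
    calc wBlock p c (fun i => η (i + (-j - 1))) = wBlock p c (fun i => η' (i + -j)) := by
          simp only [η', add_sub_assoc]
      _ = shiftFactor p c (exN η) (-j - 1) * wBlock p c η := by
          rw [ih hη', hN, hS, hw]
          ring

end BlockingMeasure

/-- Shift formula for the blocking weight (ASEP case of Lemma 5.2): for `η ∈ H` and
`j ∈ ℤ`, `w^c(τ^j η) = (q/p)^{(j² - j)/2 - N(η)·j} · e^{c·j} · w^c(η)`, where
`(τ^j η)_i = η_{i+j}`. -/
theorem wBlock_shift (p c : ℝ) (hp : 1 / 2 < p) (hp1 : p < 1)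
    (η : ℤ → ℕ) (hη : memH η) (j : ℤ) :
    wBlock p c (fun i => η (i + j)) =
      ((1 - p) / p) ^ ((j ^ 2 - j) / 2 - exN η * j) * Real.exp (c * j) * wBlock p c η :=
  BlockingMeasure.wBlock_shift_eq_shiftFactor_mul ((one_lt_div (by linarith)).2 (by linarith))
    hη j
end

section
/- Well-definedness and c-independence of the conditioned blocking measure (Lemma 3.3): for every c ∈ ℝ and n ∈ ℤ the sum ∑_{z : N(z) = n} μ^c(z) is finite and strictly positive, and the conditional weight is independent of c: for any two reals c and c′ and any z with N(z) = n, μ^c(z) / ∑_{y : N(y) = n} μ^c(y) = μ^{c′}(z) / ∑_{y : N(y) = n} μ^{c′}(y). -/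
/- Configurations `z : ℤ → {ω^min, …, ω^max}` of a misanthrope-type process, with
`z_i = ω^min` for all but finitely many `i ≤ 0` and `z_i = ω^max` for all but finitely
many `i ≥ 1`. -/

/-- Membership in the state space `Ω`. -/
def inOmegaGen (ωmin ωmax : ℤ) (z : ℤ → ℤ) : Prop :=
  (∀ i, ωmin ≤ z i ∧ z i ≤ ωmax) ∧
    {i : ℤ | i ≤ 0 ∧ z i ≠ ωmin}.Finite ∧ {i : ℤ | 1 ≤ i ∧ z i ≠ ωmax}.Finite

/-- The conserved quantity `N(z) = ∑_{i ≥ 1} (ω^max - z_i) - ∑_{i ≤ 0} (z_i - ω^min)`. -/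
noncomputable def Ngen (ωmin ωmax : ℤ) (z : ℤ → ℤ) : ℤ :=
  (∑ᶠ i ∈ {i : ℤ | 1 ≤ i}, (ωmax - z i)) - ∑ᶠ i ∈ {i : ℤ | i ≤ 0}, (z i - ωmin)

/-- The single-site marginal `μ^θ(x) = (e^{θx}/g(x)) / ∑_{y=ω^min}^{ω^max} e^{θy}/g(y)`. -/
noncomputable def muTheta (g : ℤ → ℝ) (ωmin ωmax : ℤ) (θ : ℝ) (x : ℤ) : ℝ :=
  (Real.exp (θ * x) / g x) / ∑ y ∈ Finset.Icc ωmin ωmax, Real.exp (θ * y) / g y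

/-- The product blocking weight `μ^c(z) = ∏_{i ∈ ℤ} μ^{θ_i}(z_i)` with
`θ_i = c + i · ln(p/q)`, `q = 1 - p`. -/
noncomputable def muC (g : ℤ → ℝ) (ωmin ωmax : ℤ) (p c : ℝ) (z : ℤ → ℤ) : ℝ :=
  ∏' i : ℤ, muTheta g ωmin ωmax (c + i * Real.log (p / (1 - p))) (z i)

/-!
Put `L = ln(p/q) > 0` and let `z⁰` be the step configuration (`ω^min` on `i ≤ 0`, `ω^max` on
`i ≥ 1`), so that every `z ∈ Ω` differs from `z⁰` at finitely many sites. Since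
`1/μ^θ(ω^max) - 1 = O(e^{-θ})` and `1/μ^θ(ω^min) - 1 = O(e^{θ})`, the logarithms of the factors
of `μ^c(z⁰)` are summable along `θ_i = c + iL`, hence so are those of every `z ∈ Ω`: the infinite
product converges to `exp ∑ log > 0`. All factors are at most `1`, so `μ^c(z)` is bounded by its
restriction to any finite window; the window products of distinct configurations are terms of the
expansion of a product of probability vectors, which gives summability.

For the `c`-independence, `μ^θ(x)/μ^θ(x') = e^{θ(x - x')} g(x')/g(x)`, so shifting `c` multiplies
the site ratios `μ^{θ_i}(z_i)/μ^{θ_i}(z⁰_i)` by `e^{Δc (z_i - z⁰_i)}`, whose product over the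
finitely many sites where `z ≠ z⁰` is `e^{-Δc N(z)}`. Hence `μ^c` and `μ^{c'}` are proportional on
each fibre `{N = n}` and have the same normalisation.
-/

open Real

theorem tprod_eq_tprod_mul_prod_div {ι K : Type*} [Field K] [TopologicalSpace K]
    [ContinuousMul K] [T2Space K] {f h : ι → K} (hh : Multipliable h) (h0 : ∀ i, h i ≠ 0)
    (s : Finset ι) (hfh : ∀ i ∉ s, f i = h i) :
    ∏' i, f i = (∏' i, h i) * ∏ i ∈ s, f i / h i := by
  have hq : ∀ i ∉ s, f i / h i = 1 := fun i hi => by rw [hfh i hi, div_self (h0 i)]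
  calc ∏' i, f i = ∏' i, h i * (f i / h i) :=
        tprod_congr fun i => (mul_div_cancel₀ _ (h0 i)).symm
    _ = (∏' i, h i) * ∏' i, f i / h i := hh.tprod_mul (multipliable_of_ne_finset_one hq)
    _ = (∏' i, h i) * ∏ i ∈ s, f i / h i := by rw [tprod_eq_prod hq]

theorem Finset.sum_prod_le_one {ι α : Type*} (q : ι → α → ℝ) (T : Finset α)
    (hq0 : ∀ i, ∀ x ∈ T, 0 ≤ q i x) (hq1 : ∀ i, ∑ x ∈ T, q i x ≤ 1) (s : Finset ι)
    (u : Finset (ι → α)) (huT : ∀ z ∈ u, ∀ i, z i ∈ T)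
    (hus : ∀ z ∈ u, ∀ z' ∈ u, ∀ i ∉ s, z i = z' i) :
    ∑ z ∈ u, ∏ i ∈ s, q i (z i) ≤ 1 := by
  classical
  let r : (ι → α) → (s → α) := fun z i => z i
  have hinj : Set.InjOn r u := fun z hz z' hz' hzz' => funext fun i =>
    if hi : i ∈ s then congrFun hzz' ⟨i, hi⟩ else hus z hz z' hz' i hi
  calc ∑ z ∈ u, ∏ i ∈ s, q i (z i) = ∑ φ ∈ u.image r, ∏ i : s, q i (φ i) := by
        rw [Finset.sum_image hinj]
        exact Finset.sum_congr rfl fun z _ => (Finset.prod_coe_sort s fun i => q i (z i)).symm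
    _ ≤ ∑ φ ∈ Fintype.piFinset fun _ : s => T, ∏ i : s, q i (φ i) :=
        Finset.sum_le_sum_of_subset_of_nonneg
          (fun φ hφ => by
            obtain ⟨z, hz, rfl⟩ := Finset.mem_image.1 hφ
            exact Fintype.mem_piFinset.2 fun i => huT z hz i)
          fun φ hφ _ => Finset.prod_nonneg fun i _ => hq0 i _ (Fintype.mem_piFinset.1 hφ i)
    _ = ∏ i : s, ∑ x ∈ T, q i x := (Finset.prod_univ_sum _ _).symm
    _ ≤ 1 := Finset.prod_le_one (fun i _ => Finset.sum_nonneg (hq0 i)) fun i _ => hq1 i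

def stepConfig (ωmin ωmax : ℤ) (i : ℤ) : ℤ := if i ≤ 0 then ωmin else ωmax

section Configurations

variable {ωmin ωmax : ℤ}

theorem stepConfig_mem_Icc (hω : ωmin ≤ ωmax) (i : ℤ) :
    stepConfig ωmin ωmax i ∈ Finset.Icc ωmin ωmax := by
  unfold stepConfig
  split_ifs <;> simp [hω]

theorem inOmegaGen.mem_Icc {z : ℤ → ℤ} (hz : inOmegaGen ωmin ωmax z) (i : ℤ) :
    z i ∈ Finset.Icc ωmin ωmax :=
  Finset.mem_Icc.2 (hz.1 i)

theorem inOmegaGen.min_le_max {z : ℤ → ℤ} (hz : inOmegaGen ωmin ωmax z) : ωmin ≤ ωmax :=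
  (hz.1 0).1.trans (hz.1 0).2

theorem inOmegaGen_of_eq_stepConfig {z : ℤ → ℤ} (hz : ∀ i, z i ∈ Finset.Icc ωmin ωmax)
    (s : Finset ℤ) (hs : ∀ i ∉ s, z i = stepConfig ωmin ωmax i) : inOmegaGen ωmin ωmax z := by
  refine ⟨fun i => Finset.mem_Icc.1 (hz i), s.finite_toSet.subset ?_, s.finite_toSet.subset ?_⟩
  · rintro i ⟨hi, hne⟩
    by_contra his
    exact hne (by rw [hs i his, stepConfig, if_pos hi])
  · rintro i ⟨hi, hne⟩
    by_contra his
    exact hne (by rw [hs i his, stepConfig, if_neg (by omega)])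

theorem inOmegaGen_stepConfig (hω : ωmin ≤ ωmax) :
    inOmegaGen ωmin ωmax (stepConfig ωmin ωmax) :=
  inOmegaGen_of_eq_stepConfig (stepConfig_mem_Icc hω) ∅ fun _ _ => rfl

theorem inOmegaGen.exists_finset_eq_stepConfig {z : ℤ → ℤ} (hz : inOmegaGen ωmin ωmax z) :
    ∃ s : Finset ℤ, ∀ i ∉ s, z i = stepConfig ωmin ωmax i := by
  refine ⟨(hz.2.1.union hz.2.2).toFinset, fun i hi => ?_⟩
  simp only [Set.Finite.mem_toFinset, Set.mem_union, Set.mem_ofPred_eq, not_or, not_and,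
    not_not] at hi
  unfold stepConfig
  split_ifs with h
  · exact hi.1 h
  · exact hi.2 (by omega)

theorem Ngen_eq_sum_stepConfig_sub {z : ℤ → ℤ} (s : Finset ℤ)
    (hs : ∀ i ∉ s, z i = stepConfig ωmin ωmax i) :
    Ngen ωmin ωmax z = ∑ i ∈ s, (stepConfig ωmin ωmax i - z i) := by
  set F : ℤ → ℤ := fun i => stepConfig ωmin ωmax i - z i
  have hF : Function.support F ⊆ s := fun i hi => by
    by_contra his
    exact hi (by simp only [F, hs i his, sub_self])
  have hpos : ∑ᶠ i ∈ {i : ℤ | 1 ≤ i}, (ωmax - z i) = ∑ᶠ i ∈ {i : ℤ | 1 ≤ i}, F i :=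
    finsum_mem_congr rfl fun i (hi : 1 ≤ i) => by
      simp only [F, stepConfig, if_neg (show ¬i ≤ 0 by omega)]
  have hneg : ∑ᶠ i ∈ {i : ℤ | i ≤ 0}, (z i - ωmin) = -∑ᶠ i ∈ {i : ℤ | 1 ≤ i}ᶜ, F i := by
    simp_rw [← finsum_neg_distrib]
    refine finsum_mem_congr (by ext; simp; omega) fun i (hi : ¬1 ≤ i) => ?_
    simp only [F, stepConfig, if_pos (show i ≤ 0 by omega), neg_sub]
  have hfin := s.finite_toSet.subset hF
  rw [Ngen, hpos, hneg, sub_neg_eq_add, ← finsum_mem_union' disjoint_compl_right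
    (hfin.inter_of_right _) (hfin.inter_of_right _), Set.union_compl_self, finsum_mem_univ,
    finsum_eq_sum_of_support_subset F hF]

theorem inOmegaGen_and_Ngen_piecewise_stepConfig (s : Finset ℤ) {v e : ℤ}
    (hv : v ∈ Finset.Icc ωmin ωmax) (he : ∀ i ∈ s, stepConfig ωmin ωmax i - v = e) :
    inOmegaGen ωmin ωmax (s.piecewise (fun _ => v) (stepConfig ωmin ωmax)) ∧
      Ngen ωmin ωmax (s.piecewise (fun _ => v) (stepConfig ωmin ωmax)) = s.card * e := by
  have hoff : ∀ i ∉ s, s.piecewise (fun _ => v) (stepConfig ωmin ωmax) i =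
      stepConfig ωmin ωmax i := fun i hi => s.piecewise_eq_of_notMem _ _ hi
  refine ⟨inOmegaGen_of_eq_stepConfig (fun i => ?_) s hoff, ?_⟩
  · by_cases hi : i ∈ s
    · rwa [s.piecewise_eq_of_mem _ _ hi]
    · rw [hoff i hi]
      exact stepConfig_mem_Icc (by have := Finset.mem_Icc.1 hv; omega) i
  · rw [Ngen_eq_sum_stepConfig_sub s hoff, Finset.sum_congr rfl fun i hi => by
      rw [s.piecewise_eq_of_mem _ _ hi, he i hi], Finset.sum_const, nsmul_eq_mul]

theorem exists_Ngen_eq (hω : ωmin < ωmax) (n : ℤ) :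
    ∃ z, inOmegaGen ωmin ωmax z ∧ Ngen ωmin ωmax z = n := by
  have hmem : ∀ v, ωmin ≤ v → v ≤ ωmax → v ∈ Finset.Icc ωmin ωmax := fun v h1 h2 =>
    Finset.mem_Icc.2 ⟨h1, h2⟩
  obtain ⟨m, rfl | rfl⟩ := Int.eq_nat_or_neg n
  · obtain ⟨hz, hN⟩ := inOmegaGen_and_Ngen_piecewise_stepConfig (Finset.Icc 1 (m : ℤ)) (e := 1)
      (hmem (ωmax - 1) (by omega) (by omega)) fun i hi => by
        rw [stepConfig, if_neg (show ¬i ≤ 0 by simp at hi; omega)]; ring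
    exact ⟨_, hz, by simp [hN]⟩
  · obtain ⟨hz, hN⟩ := inOmegaGen_and_Ngen_piecewise_stepConfig (Finset.Icc (1 - m : ℤ) 0) (e := -1)
      (hmem (ωmin + 1) (by omega) (by omega)) fun i hi => by
        rw [stepConfig, if_pos (show i ≤ 0 by simp at hi; omega)]; ring
    exact ⟨_, hz, by simp [hN]⟩

end Configurations

noncomputable def blockingWeight (g : ℤ → ℝ) (ωmin ωmax : ℤ) (L c : ℝ) (z : ℤ → ℤ) : ℝ :=
  ∏' i : ℤ, muTheta g ωmin ωmax (c + i * L) (z i)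

theorem muC_eq_blockingWeight (g : ℤ → ℝ) (ωmin ωmax : ℤ) (p c : ℝ) (z : ℤ → ℤ) :
    muC g ωmin ωmax p c z = blockingWeight g ωmin ωmax (log (p / (1 - p))) c z :=
  rfl

section Weights

variable {g : ℤ → ℝ} {ωmin ωmax : ℤ} (hg : ∀ x ∈ Finset.Icc ωmin ωmax, 0 < g x)
include hg

theorem sum_exp_mul_div_pos (θ : ℝ) {x : ℤ} (hx : x ∈ Finset.Icc ωmin ωmax) :
    0 < ∑ y ∈ Finset.Icc ωmin ωmax, exp (θ * y) / g y :=
  Finset.sum_pos (fun y hy => div_pos (exp_pos _) (hg y hy)) ⟨x, hx⟩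

theorem muTheta_pos (θ : ℝ) {x : ℤ} (hx : x ∈ Finset.Icc ωmin ωmax) :
    0 < muTheta g ωmin ωmax θ x :=
  div_pos (div_pos (exp_pos _) (hg x hx)) (sum_exp_mul_div_pos hg θ hx)

theorem muTheta_le_one (θ : ℝ) {x : ℤ} (hx : x ∈ Finset.Icc ωmin ωmax) :
    muTheta g ωmin ωmax θ x ≤ 1 :=
  div_le_one_of_le₀
    (Finset.single_le_sum (f := fun y : ℤ => exp (θ * y) / g y)
      (fun y hy => (div_pos (exp_pos _) (hg y hy)).le) hx)
    (sum_exp_mul_div_pos hg θ hx).le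

theorem sum_muTheta (hω : ωmin ≤ ωmax) (θ : ℝ) :
    ∑ x ∈ Finset.Icc ωmin ωmax, muTheta g ωmin ωmax θ x = 1 := by
  simp only [muTheta, ← Finset.sum_div]
  exact div_self (sum_exp_mul_div_pos hg θ (Finset.left_mem_Icc.2 hω)).ne'

theorem muTheta_div_muTheta (θ : ℝ) {x x' : ℤ} (hx : x ∈ Finset.Icc ωmin ωmax)
    (hx' : x' ∈ Finset.Icc ωmin ωmax) :
    muTheta g ωmin ωmax θ x / muTheta g ωmin ωmax θ x' =
      exp (θ * (x - x')) * (g x' / g x) := by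
  have := (sum_exp_mul_div_pos hg θ hx).ne'
  have := (hg x hx).ne'
  have := (hg x' hx').ne'
  rw [muTheta, muTheta, mul_sub, exp_sub]
  field_simp

theorem muTheta_add_div_muTheta_add (θ t : ℝ) {x x' : ℤ} (hx : x ∈ Finset.Icc ωmin ωmax)
    (hx' : x' ∈ Finset.Icc ωmin ωmax) :
    muTheta g ωmin ωmax (θ + t) x / muTheta g ωmin ωmax (θ + t) x' =
      exp (t * (x - x')) * (muTheta g ωmin ωmax θ x / muTheta g ωmin ωmax θ x') := by
  rw [muTheta_div_muTheta hg _ hx hx', muTheta_div_muTheta hg _ hx hx', add_mul, exp_add]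
  ring

theorem inv_muTheta_sub_one (θ : ℝ) {x : ℤ} (hx : x ∈ Finset.Icc ωmin ωmax) :
    (muTheta g ωmin ωmax θ x)⁻¹ - 1 =
      ∑ y ∈ (Finset.Icc ωmin ωmax).erase x, exp (θ * (y - x)) * (g x / g y) := by
  have hμ := (muTheta_pos hg θ hx).ne'
  have hω := (Finset.mem_Icc.1 hx).1.trans (Finset.mem_Icc.1 hx).2
  calc (muTheta g ωmin ωmax θ x)⁻¹ - 1
      = ∑ y ∈ Finset.Icc ωmin ωmax, muTheta g ωmin ωmax θ y / muTheta g ωmin ωmax θ x -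
          muTheta g ωmin ωmax θ x / muTheta g ωmin ωmax θ x := by
        rw [← Finset.sum_div, sum_muTheta hg hω, one_div, div_self hμ]
    _ = ∑ y ∈ (Finset.Icc ωmin ωmax).erase x,
          muTheta g ωmin ωmax θ y / muTheta g ωmin ωmax θ x := by
        rw [← Finset.add_sum_erase _ _ hx, add_sub_cancel_left]
    _ = _ := Finset.sum_congr rfl fun y hy =>
        muTheta_div_muTheta hg θ (Finset.mem_of_mem_erase hy) hx

theorem summable_inv_muTheta_sub_one {x : ℤ} (hx : x ∈ Finset.Icc ωmin ωmax) {a : ℝ}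
    (ha : ∀ y ∈ Finset.Icc ωmin ωmax, y ≠ x → a * (y - x) < 0) (b : ℝ) :
    Summable fun n : ℕ => (muTheta g ωmin ωmax (b + n * a) x)⁻¹ - 1 := by
  simp_rw [inv_muTheta_sub_one hg _ hx]
  refine summable_sum fun y hy => ?_
  refine ((summable_exp_nat_mul_iff.2 (ha y (Finset.mem_of_mem_erase hy)
    (Finset.ne_of_mem_erase hy))).mul_left (exp (b * (y - x)) * (g x / g y))).congr fun n => ?_
  rw [show (b + n * a) * (y - x) = b * (y - x) + n * (a * (y - x)) by ring, exp_add]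
  ring

variable {L : ℝ} (hL : 0 < L)
include hL

theorem summable_log_muTheta_stepConfig (hω : ωmin ≤ ωmax) (c : ℝ) :
    Summable fun i : ℤ => log (muTheta g ωmin ωmax (c + i * L) (stepConfig ωmin ωmax i)) := by
  suffices Summable fun i : ℤ =>
      (muTheta g ωmin ωmax (c + i * L) (stepConfig ωmin ωmax i))⁻¹ - 1 from
    (Real.summable_log_one_add_of_summable this).neg.congr fun i => by
      rw [add_sub_cancel, log_inv, neg_neg]
  refine .of_nat_of_neg_add_one ((summable_nat_add_iff 1).1 ?_) ?_
  · refine (summable_inv_muTheta_sub_one hg (Finset.right_mem_Icc.2 hω) (a := L)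
      (fun y hy hne => mul_neg_of_pos_of_neg hL (sub_neg.2 ?_)) (c + L)).congr fun n => ?_
    · exact_mod_cast lt_of_le_of_ne (Finset.mem_Icc.1 hy).2 hne
    · rw [stepConfig, if_neg (by omega)]
      push_cast
      ring_nf
  · refine (summable_inv_muTheta_sub_one hg (Finset.left_mem_Icc.2 hω) (a := -L)
      (fun y hy hne => mul_neg_of_neg_of_pos (neg_neg_of_pos hL) (sub_pos.2 ?_)) (c - L)).congr
      fun n => ?_
    · exact_mod_cast lt_of_le_of_ne (Finset.mem_Icc.1 hy).1 hne.symm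
    · rw [stepConfig, if_pos (by omega)]
      push_cast
      ring_nf

theorem inOmegaGen.summable_log_muTheta {z : ℤ → ℤ} (hz : inOmegaGen ωmin ωmax z) (c : ℝ) :
    Summable fun i : ℤ => log (muTheta g ωmin ωmax (c + i * L) (z i)) := by
  obtain ⟨s, hs⟩ := hz.exists_finset_eq_stepConfig
  refine (summable_log_muTheta_stepConfig hg hL hz.min_le_max c).congr_cofinite ?_
  filter_upwards [s.eventually_cofinite_notMem] with i hi
  rw [hs i hi]

theorem blockingWeight_eq_exp_tsum {z : ℤ → ℤ} (hz : inOmegaGen ωmin ωmax z) (c : ℝ) :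
    blockingWeight g ωmin ωmax L c z =
      exp (∑' i : ℤ, log (muTheta g ωmin ωmax (c + i * L) (z i))) :=
  (rexp_tsum_eq_tprod (fun i => muTheta_pos hg _ (hz.mem_Icc i))
    (hz.summable_log_muTheta hg hL c)).symm

theorem blockingWeight_pos {z : ℤ → ℤ} (hz : inOmegaGen ωmin ωmax z) (c : ℝ) :
    0 < blockingWeight g ωmin ωmax L c z := by
  rw [blockingWeight_eq_exp_tsum hg hL hz]
  exact exp_pos _

theorem blockingWeight_le_prod {z : ℤ → ℤ} (hz : inOmegaGen ωmin ωmax z) (c : ℝ)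
    (s : Finset ℤ) :
    blockingWeight g ωmin ωmax L c z ≤ ∏ i ∈ s, muTheta g ωmin ωmax (c + i * L) (z i) := by
  have htail := (hz.summable_log_muTheta hg hL c).neg.sum_le_tsum s fun i _ =>
    neg_nonneg.2 (log_nonpos (muTheta_pos hg _ (hz.mem_Icc i)).le
      (muTheta_le_one hg _ (hz.mem_Icc i)))
  rw [Finset.sum_neg_distrib, tsum_neg, neg_le_neg_iff] at htail
  calc blockingWeight g ωmin ωmax L c z
      ≤ exp (∑ i ∈ s, log (muTheta g ωmin ωmax (c + i * L) (z i))) := by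
        rw [blockingWeight_eq_exp_tsum hg hL hz]
        exact exp_le_exp.2 htail
    _ = ∏ i ∈ s, muTheta g ωmin ωmax (c + i * L) (z i) := by
        rw [exp_sum]
        exact Finset.prod_congr rfl fun i _ => exp_log (muTheta_pos hg _ (hz.mem_Icc i))

theorem blockingWeight_eq_mul_prod_div {z z' : ℤ → ℤ} (hz' : inOmegaGen ωmin ωmax z')
    (s : Finset ℤ) (hs : ∀ i ∉ s, z i = z' i) (c : ℝ) :
    blockingWeight g ωmin ωmax L c z = blockingWeight g ωmin ωmax L c z' *
      ∏ i ∈ s, muTheta g ωmin ωmax (c + i * L) (z i) / muTheta g ωmin ωmax (c + i * L) (z' i) :=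
  tprod_eq_tprod_mul_prod_div
    (Real.multipliable_of_summable_log (fun i => muTheta_pos hg _ (hz'.mem_Icc i))
      (hz'.summable_log_muTheta hg hL c))
    (fun i => (muTheta_pos hg _ (hz'.mem_Icc i)).ne') s fun i hi => by rw [hs i hi]

theorem blockingWeight_eq_exp_mul {z : ℤ → ℤ} (hz : inOmegaGen ωmin ωmax z) (c c' : ℝ) :
    blockingWeight g ωmin ωmax L c z =
      exp ((c' - c) * Ngen ωmin ωmax z) *
        (blockingWeight g ωmin ωmax L c (stepConfig ωmin ωmax) /
          blockingWeight g ωmin ωmax L c' (stepConfig ωmin ωmax)) *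
        blockingWeight g ωmin ωmax L c' z := by
  obtain ⟨s, hs⟩ := hz.exists_finset_eq_stepConfig
  have hstep := inOmegaGen_stepConfig hz.min_le_max
  have hshift : ∀ i ∈ s,
      muTheta g ωmin ωmax (c + i * L) (z i) /
          muTheta g ωmin ωmax (c + i * L) (stepConfig ωmin ωmax i) =
        exp ((c' - c) * (stepConfig ωmin ωmax i - z i)) *
          (muTheta g ωmin ωmax (c' + i * L) (z i) /
            muTheta g ωmin ωmax (c' + i * L) (stepConfig ωmin ωmax i)) := fun i _ => by
    rw [show c + i * L = c' + i * L + (c - c') by ring,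
      muTheta_add_div_muTheta_add hg _ _ (hz.mem_Icc i) (hstep.mem_Icc i)]
    ring_nf
  rw [blockingWeight_eq_mul_prod_div hg hL hstep s hs c, Finset.prod_congr rfl hshift,
    Finset.prod_mul_distrib, ← exp_sum, ← Finset.mul_sum, Ngen_eq_sum_stepConfig_sub s hs,
    blockingWeight_eq_mul_prod_div hg hL hstep s hs c']
  have := (blockingWeight_pos hg hL hstep c').ne'
  push_cast
  generalize (∏ i ∈ s, _ : ℝ) = P
  field_simp

theorem summable_blockingWeight (hω : ωmin ≤ ωmax) {P : (ℤ → ℤ) → Prop}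
    (hP : ∀ z, P z → inOmegaGen ωmin ωmax z) (c : ℝ) :
    Summable fun z : {z // P z} => blockingWeight g ωmin ωmax L c z.1 := by
  refine summable_of_sum_le (c := 1) (fun z => (blockingWeight_pos hg hL (hP z.1 z.2) c).le)
    fun u => ?_
  choose S hS using fun z : {z // P z} => (hP z.1 z.2).exists_finset_eq_stepConfig
  have hstep : ∀ z ∈ u.map (Function.Embedding.subtype P), ∀ i ∉ u.biUnion S,
      z i = stepConfig ωmin ωmax i := fun z hz i hi => by
    obtain ⟨z, hzu, rfl⟩ := Finset.mem_map.1 hz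
    exact hS z i fun h => hi (Finset.mem_biUnion.2 ⟨z, hzu, h⟩)
  calc ∑ z ∈ u, blockingWeight g ωmin ωmax L c z.1
      ≤ ∑ z ∈ u, ∏ i ∈ u.biUnion S, muTheta g ωmin ωmax (c + i * L) (z.1 i) :=
        Finset.sum_le_sum fun z _ => blockingWeight_le_prod hg hL (hP z.1 z.2) c _
    _ = ∑ z ∈ u.map (Function.Embedding.subtype P),
          ∏ i ∈ u.biUnion S, muTheta g ωmin ωmax (c + i * L) (z i) := by
        rw [Finset.sum_map]
        rfl
    _ ≤ 1 := by
      refine Finset.sum_prod_le_one (fun (i : ℤ) x => muTheta g ωmin ωmax (c + i * L) x)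
        (Finset.Icc ωmin ωmax) (fun i x hx => (muTheta_pos hg _ hx).le)
        (fun i => (sum_muTheta hg hω _).le) _ _ (fun z hz i => ?_)
        fun z hz z' hz' i hi => by rw [hstep z hz i hi, hstep z' hz' i hi]
      obtain ⟨z, -, rfl⟩ := Finset.mem_map.1 hz
      exact (hP z.1 z.2).mem_Icc i

end Weights

/-- Well-definedness and `c`-independence of the conditioned blocking measure (Lemma 3.3):
for every `c ∈ ℝ` and `n ∈ ℤ` the sum `∑_{z : N(z) = n} μ^c(z)` is finite (the family is
summable) and strictly positive, and the conditional weight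
`μ^c(z) / ∑_{y : N(y) = n} μ^c(y)` does not depend on `c`. -/
theorem conditioned_blocking_measure_well_defined (p : ℝ) (hp : 1 / 2 < p) (hp1 : p < 1)
    (ωmin ωmax : ℤ) (hω : ωmin < ωmax) (g : ℤ → ℝ)
    (hg : ∀ x ∈ Finset.Icc ωmin ωmax, 0 < g x) :
    (∀ (c : ℝ) (n : ℤ),
      Summable (fun z : {z : ℤ → ℤ // inOmegaGen ωmin ωmax z ∧ Ngen ωmin ωmax z = n} =>
        muC g ωmin ωmax p c z.1) ∧
      0 < ∑' z : {z : ℤ → ℤ // inOmegaGen ωmin ωmax z ∧ Ngen ωmin ωmax z = n},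
        muC g ωmin ωmax p c z.1) ∧
    (∀ (c c' : ℝ) (n : ℤ) (z : ℤ → ℤ), inOmegaGen ωmin ωmax z → Ngen ωmin ωmax z = n →
      muC g ωmin ωmax p c z /
          (∑' y : {y : ℤ → ℤ // inOmegaGen ωmin ωmax y ∧ Ngen ωmin ωmax y = n},
            muC g ωmin ωmax p c y.1) =
        muC g ωmin ωmax p c' z /
          ∑' y : {y : ℤ → ℤ // inOmegaGen ωmin ωmax y ∧ Ngen ωmin ωmax y = n},
            muC g ωmin ωmax p c' y.1) := by
  set L := log (p / (1 - p))
  have hL : 0 < L := log_pos ((one_lt_div (by linarith)).2 (by linarith))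
  have hsum : ∀ c n, Summable fun z : {z // inOmegaGen ωmin ωmax z ∧ Ngen ωmin ωmax z = n} =>
      muC g ωmin ωmax p c z.1 := fun c n =>
    summable_blockingWeight hg hL hω.le (fun _ hz => hz.1) c
  refine ⟨fun c n => ⟨hsum c n, ?_⟩, fun c c' n z hz hN => ?_⟩
  · obtain ⟨z, hz, hN⟩ := exists_Ngen_eq hω n
    exact (hsum c n).tsum_pos (fun y => (blockingWeight_pos hg hL y.2.1 c).le) ⟨z, hz, hN⟩
      (blockingWeight_pos hg hL hz c)
  · have hstep := inOmegaGen_stepConfig hω.le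
    set R := exp ((c' - c) * n) * (blockingWeight g ωmin ωmax L c (stepConfig ωmin ωmax) /
      blockingWeight g ωmin ωmax L c' (stepConfig ωmin ωmax))
    have hR : R ≠ 0 := (mul_pos (exp_pos _) (div_pos (blockingWeight_pos hg hL hstep c)
      (blockingWeight_pos hg hL hstep c'))).ne'
    have hprop : ∀ y : {y // inOmegaGen ωmin ωmax y ∧ Ngen ωmin ωmax y = n},
        muC g ωmin ωmax p c y.1 = R * muC g ωmin ωmax p c' y.1 := fun y => by
      rw [muC_eq_blockingWeight, muC_eq_blockingWeight,
        blockingWeight_eq_exp_mul hg hL y.2.1 c c', y.2.2]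
    rw [hprop ⟨z, hz, hN⟩, tsum_congr hprop, tsum_mul_left, mul_div_mul_left _ _ hR]
end

section
/- Shift of the conserved quantity: for every z ∈ Ω and every j ∈ ℤ, the shifted configuration τ^j z lies in Ω and N(τ^j z) = N(z) − j·(ω^max − ω^min). -/
/-!
Both finiteness conditions defining `Ω` say that `z` is eventually constant at `±∞`, which is
invariant under translations, so `Ω` is shift-invariant. Shifting by one moves the site `1` from
the right-hand sum of `N` to the left-hand one, lowering `N` by
`(ω^max - z_1) + (z_1 - ω^min) = ω^max - ω^min`; induction on `j` gives the general shift.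
-/

open Set Filter Function

section EventuallyConst

variable {α β : Type*} [LinearOrder β] [LocallyFiniteOrder β] {z : β → α} {c : α}

theorem finite_setOf_le_ne_iff_eventually_atBot [NoMinOrder β] (a : β) :
    {i | i ≤ a ∧ z i ≠ c}.Finite ↔ ∀ᶠ i in atBot, z i = c := by
  have : Nonempty β := ⟨a⟩
  constructor
  · intro h
    obtain ⟨b, hb⟩ := h.bddBelow
    filter_upwards [eventually_lt_atBot b, eventually_le_atBot a] with i hib hia
    by_contra hne
    exact (hb ⟨hia, hne⟩).not_gt hib
  · intro h
    obtain ⟨b, hb⟩ := eventually_atBot.1 h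
    refine (finite_Icc b a).subset fun i ⟨hia, hne⟩ => ⟨?_, hia⟩
    by_contra! hib
    exact hne (hb i hib.le)

theorem finite_setOf_ge_ne_iff_eventually_atTop [NoMaxOrder β] (a : β) :
    {i | a ≤ i ∧ z i ≠ c}.Finite ↔ ∀ᶠ i in atTop, z i = c := by
  have : Nonempty β := ⟨a⟩
  constructor
  · intro h
    obtain ⟨b, hb⟩ := h.bddAbove
    filter_upwards [eventually_gt_atTop b, eventually_ge_atTop a] with i hib hia
    by_contra hne
    exact (hb ⟨hia, hne⟩).not_gt hib
  · intro h
    obtain ⟨b, hb⟩ := eventually_atTop.1 h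
    refine (finite_Icc a b).subset fun i ⟨hia, hne⟩ => ⟨hia, ?_⟩
    by_contra! hib
    exact hne (hb i hib.le)

end EventuallyConst

theorem inOmegaGen_comp_add {ωmin ωmax : ℤ} {z : ℤ → ℤ} (hz : inOmegaGen ωmin ωmax z) (j : ℤ) :
    inOmegaGen ωmin ωmax (fun i => z (i + j)) := by
  obtain ⟨hbounds, hbot, htop⟩ := hz
  refine ⟨fun i => hbounds (i + j), ?_, ?_⟩
  · exact (finite_setOf_le_ne_iff_eventually_atBot 0).2 <|
      (tendsto_atBot_add_const_right _ j tendsto_id).eventually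
        ((finite_setOf_le_ne_iff_eventually_atBot 0).1 hbot)
  · exact (finite_setOf_ge_ne_iff_eventually_atTop 1).2 <|
      (tendsto_atTop_add_const_right _ j tendsto_id).eventually
        ((finite_setOf_ge_ne_iff_eventually_atTop 1).1 htop)

section Finsum

variable {M : Type*} [AddCommMonoid M] {f : ℤ → M}

theorem finsum_mem_Ici_eq_add_finsum_mem_Ici_comp_add_one (a : ℤ)
    (hf : (Ici a ∩ support f).Finite) :
    ∑ᶠ i ∈ Ici a, f i = f a + ∑ᶠ i ∈ Ici a, f (i + 1) := by
  have hIoi : Ioi a = (· + 1) '' Ici a := by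
    rw [image_add_const_Ici, ← Order.succ_eq_add_one, Order.Ici_succ]
  rw [← finsum_mem_image (add_left_injective 1).injOn, ← hIoi, ← Ioi_insert,
    finsum_mem_insert' f self_notMem_Ioi (hf.subset (inter_subset_inter_left _ Ioi_subset_Ici_self))]

theorem finsum_mem_Iic_comp_add_one (a : ℤ) (hf : (Iic a ∩ support f).Finite) :
    ∑ᶠ i ∈ Iic a, f (i + 1) = f (a + 1) + ∑ᶠ i ∈ Iic a, f i := by
  rw [← finsum_mem_image (add_left_injective 1).injOn, image_add_const_Iic,
    ← Order.succ_eq_add_one, Order.Iic_succ, finsum_mem_insert' f (by simp) hf]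

end Finsum

theorem Ngen_comp_add_one {ωmin ωmax : ℤ} {z : ℤ → ℤ}
    (hbot : {i : ℤ | i ≤ 0 ∧ z i ≠ ωmin}.Finite) (htop : {i : ℤ | 1 ≤ i ∧ z i ≠ ωmax}.Finite) :
    Ngen ωmin ωmax (fun i => z (i + 1)) = Ngen ωmin ωmax z - (ωmax - ωmin) := by
  have hsupp_top : (Ici 1 ∩ support fun i => ωmax - z i).Finite :=
    htop.subset fun i ⟨hi, hne⟩ => ⟨hi, fun h => hne (sub_eq_zero.2 h.symm)⟩
  have hsupp_bot : (Iic 0 ∩ support fun i => z i - ωmin).Finite :=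
    hbot.subset fun i ⟨hi, hne⟩ => ⟨hi, fun h => hne (sub_eq_zero.2 h)⟩
  simp only [Ngen, Ici_def, Iic_def, zero_add,
    finsum_mem_Ici_eq_add_finsum_mem_Ici_comp_add_one 1 hsupp_top,
    finsum_mem_Iic_comp_add_one 0 hsupp_bot]
  ring

theorem Ngen_shift_general (ωmin ωmax : ℤ) (z : ℤ → ℤ)
    (hz : inOmegaGen ωmin ωmax z) (j : ℤ) :
    inOmegaGen ωmin ωmax (fun i => z (i + j)) ∧
      Ngen ωmin ωmax (fun i => z (i + j)) = Ngen ωmin ωmax z - j * (ωmax - ωmin) := by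
  refine ⟨inOmegaGen_comp_add hz j, ?_⟩
  have step : ∀ k : ℤ, Ngen ωmin ωmax (fun i => z (i + (k + 1))) =
      Ngen ωmin ωmax (fun i => z (i + k)) - (ωmax - ωmin) := fun k => by
    obtain ⟨-, hbot, htop⟩ := inOmegaGen_comp_add hz k
    simpa only [add_assoc, add_comm 1 k] using Ngen_comp_add_one hbot htop
  induction j using Int.induction_on with
  | zero => simp only [add_zero, zero_mul, sub_zero]
  | succ k ih => rw [step, ih]; ring
  | pred k ih =>
    have h := step (-k - 1)
    rw [sub_add_cancel] at h
    linear_combination ih - h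

/-- Shift of the conserved quantity: for every `z ∈ Ω` and `j ∈ ℤ`, the shifted
configuration `(τ^j z)_i = z_{i+j}` lies in `Ω` and
`N(τ^j z) = N(z) - j (ω^max - ω^min)`. -/
theorem Ngen_shift (ωmin ωmax : ℤ) (hω : ωmin < ωmax) (z : ℤ → ℤ)
    (hz : inOmegaGen ωmin ωmax z) (j : ℤ) :
    inOmegaGen ωmin ωmax (fun i => z (i + j)) ∧
      Ngen ωmin ωmax (fun i => z (i + j)) = Ngen ωmin ωmax z - j * (ωmax - ωmin) :=
  Ngen_shift_general ωmin ωmax z hz j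
end

section
/- Detailed balance (reversibility) of the ASEP blocking measure: for every η ∈ H and i ∈ ℤ with η_i = 1 and η_{i+1} = 0, letting η′ be the configuration equal to η except that η′_i = 0 and η′_{i+1} = 1, one has η′ ∈ H and p · w^c(η) = q · w^c(η′). -/
/-! The flip only changes the factors at sites `i` and `i + 1`, so the two weights differ by
those factors alone once finitely many factors can be split off the infinite products. This is
legitimate because a configuration in `H` agrees with the ground configuration off a finite set,
and for `p > q` the ground factors tend to `1` geometrically in both directions, so
`∏ (1 + (f_j - 1))` converges absolutely. What remains is
`p ρ_i (1 - ρ_{i+1}) = q (1 - ρ_i) ρ_{i+1}`: the odds `ρ_j / (1 - ρ_j) = e^c (p/q)^j` grow by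
the factor `p / q` from one site to the next. -/

theorem div_one_add_self_le {t : ℝ} (ht : 0 ≤ t) : t / (1 + t) ≤ t :=
  div_le_self ht (by linarith)

theorem one_sub_div_one_add_self_le_inv {t : ℝ} (ht : 0 < t) : 1 - t / (1 + t) ≤ t⁻¹ := by
  rw [one_sub_div (by positivity), add_sub_cancel_right, inv_eq_one_div]
  exact one_div_le_one_div_of_le ht (by linarith)

namespace Real

variable {β : Type*} {f g : β → ℝ}

theorem multipliable_of_summable_sub_one (hf : Summable fun j => f j - 1) : Multipliable f := by
  simpa using Real.multipliable_one_add_of_summable hf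

theorem tprod_eq_prod_mul_tprod_ite [DecidableEq β] (hf : Summable fun j => f j - 1)
    (s : Finset β) : ∏' j, f j = (∏ j ∈ s, f j) * ∏' j, if j ∈ s then 1 else f j := by
  have hin : Multipliable fun j => if j ∈ s then f j else 1 :=
    multipliable_of_ne_finset_one fun j hj => if_neg hj
  have hout : Multipliable fun j => if j ∈ s then 1 else f j := by
    refine multipliable_of_summable_sub_one (hf.congr_cofinite ?_)
    filter_upwards [s.eventually_cofinite_notMem] with j hj
    rw [if_neg hj]
  calc ∏' j, f j = ∏' j, ((if j ∈ s then f j else 1) * if j ∈ s then 1 else f j) := by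
        congr 1; ext j; split_ifs <;> simp
    _ = (∏ j ∈ s, f j) * ∏' j, if j ∈ s then 1 else f j := by
        rw [hin.tprod_mul hout, tprod_eq_prod fun j hj => if_neg hj,
          Finset.prod_congr rfl fun j hj => if_pos hj]

theorem tprod_mul_prod_eq_tprod_mul_prod (hf : Summable fun j => f j - 1)
    (hg : Summable fun j => g j - 1) (s : Finset β) (hfg : ∀ j ∉ s, f j = g j) :
    (∏' j, f j) * ∏ j ∈ s, g j = (∏' j, g j) * ∏ j ∈ s, f j := by
  classical
  have hout : (fun j => if j ∈ s then 1 else f j) = fun j => if j ∈ s then 1 else g j := by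
    ext j; split_ifs with hj
    · rfl
    · exact hfg j hj
  rw [tprod_eq_prod_mul_tprod_ite hf s, tprod_eq_prod_mul_tprod_ite hg s, hout]
  ring

end Real

noncomputable def rhoOdds (p c : ℝ) (i : ℤ) : ℝ := Real.exp c * (p / (1 - p)) ^ i

noncomputable def groundConfig : ℤ → ℕ := fun m => if 1 ≤ m then 1 else 0

section Rho

variable {p c : ℝ}

theorem rho_eq_rhoOdds (j : ℤ) : rho p c j = rhoOdds p c j / (1 + rhoOdds p c j) := rfl

theorem rhoOdds_pos (hp0 : 0 < p) (hp1 : p < 1) (j : ℤ) : 0 < rhoOdds p c j :=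
  mul_pos (Real.exp_pos c) (zpow_pos (div_pos hp0 (sub_pos.mpr hp1)) j)

theorem rhoOdds_add_one (hp0 : 0 < p) (hp1 : p < 1) (j : ℤ) :
    rhoOdds p c (j + 1) = p / (1 - p) * rhoOdds p c j := by
  rw [rhoOdds, rhoOdds, zpow_add_one₀ (div_pos hp0 (sub_pos.mpr hp1)).ne']
  ring

theorem rho_pos (hp0 : 0 < p) (hp1 : p < 1) (j : ℤ) : 0 < rho p c j := by
  have := rhoOdds_pos (c := c) hp0 hp1 j
  rw [rho_eq_rhoOdds]
  positivity

theorem rho_lt_one (hp0 : 0 < p) (hp1 : p < 1) (j : ℤ) : rho p c j < 1 := by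
  have := rhoOdds_pos (c := c) hp0 hp1 j
  rw [rho_eq_rhoOdds, div_lt_one (by positivity)]
  linarith

theorem rho_mul_one_sub_rho_add_one (hp0 : 0 < p) (hp1 : p < 1) (j : ℤ) :
    p * (rho p c j * (1 - rho p c (j + 1))) = (1 - p) * ((1 - rho p c j) * rho p c (j + 1)) := by
  have := rhoOdds_pos (c := c) hp0 hp1 j
  have : 0 < 1 - p := sub_pos.mpr hp1
  rw [rho_eq_rhoOdds, rho_eq_rhoOdds, rhoOdds_add_one hp0 hp1]
  field_simp
  ring

theorem summable_wFactor_groundConfig_sub_one (hp : 1 / 2 < p) (hp1 : p < 1) :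
    Summable fun j => wFactor p c groundConfig j - 1 := by
  have hp0 : 0 < p := by linarith
  set r := p / (1 - p)
  have hgeo : Summable fun n : ℕ => r⁻¹ ^ n :=
    summable_geometric_of_lt_one (by positivity)
      (inv_lt_one_of_one_lt₀ ((one_lt_div (sub_pos.mpr hp1)).mpr (by linarith)))
  refine Summable.of_nat_of_neg ((summable_nat_add_iff 1).mp ?_) ?_
  · refine Summable.of_norm_bounded ((summable_nat_add_iff 1).mpr (hgeo.mul_left (Real.exp (-c))))
      fun n => ?_
    have hρ := rho_lt_one (c := c) hp0 hp1 (n + 1 : ℕ)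
    have hodds : (rhoOdds p c (n + 1 : ℕ))⁻¹ = Real.exp (-c) * r⁻¹ ^ (n + 1) := by
      rw [rhoOdds, zpow_natCast, mul_inv, Real.exp_neg, inv_pow]
    have hle := one_sub_div_one_add_self_le_inv (rhoOdds_pos (c := c) hp0 hp1 (n + 1 : ℕ))
    rw [← rho_eq_rhoOdds, hodds] at hle
    have hg : groundConfig ((n + 1 : ℕ) : ℤ) = 1 := if_pos (by omega)
    rw [wFactor, if_pos hg, Real.norm_of_nonpos (by linarith)]
    linarith
  · refine Summable.of_norm_bounded (hgeo.mul_left (Real.exp c)) fun n => ?_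
    have hodds : rhoOdds p c (-n) = Real.exp c * r⁻¹ ^ n := by
      rw [rhoOdds, zpow_neg, zpow_natCast, inv_pow]
    have hle := div_one_add_self_le (rhoOdds_pos (c := c) hp0 hp1 (-n)).le
    rw [← rho_eq_rhoOdds, hodds] at hle
    have hg : groundConfig (-n) = 0 := if_neg (by omega)
    have hρ := rho_pos (c := c) hp0 hp1 (-n)
    rw [wFactor, hg, if_neg zero_ne_one, sub_sub_cancel_left, norm_neg, Real.norm_of_nonneg hρ.le]
    exact hle

end Rho

theorem memH.update {η : ℤ → ℕ} (hη : memH η) (j : ℤ) {v : ℕ} (hv : v ≤ 1) :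
    memH (Function.update η j v) := by
  obtain ⟨hle, hpart, hhole⟩ := hη
  refine ⟨fun m => ?_, (hpart.insert j).subset ?_, (hhole.insert j).subset ?_⟩
  · rcases eq_or_ne m j with rfl | hm
    · simpa using hv
    · simpa [hm] using hle m
  all_goals
    rintro m ⟨hm, hηm⟩
    rcases eq_or_ne m j with rfl | hne
    · exact Set.mem_insert _ _
    · exact Set.mem_insert_of_mem _ ⟨hm, by rwa [Function.update_of_ne hne] at hηm⟩

theorem memH.eventuallyEq_groundConfig {η : ℤ → ℕ} (hη : memH η) :
    η =ᶠ[Filter.cofinite] groundConfig := by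
  filter_upwards [(hη.2.1.union hη.2.2).eventually_cofinite_notMem] with m hm
  simp only [Set.mem_union, Set.mem_ofPred_eq, not_or, not_and] at hm
  have := hη.1 m
  unfold groundConfig
  split_ifs with h
  · have := hm.2 h; omega
  · have := hm.1 (by omega); omega

theorem summable_wFactor_sub_one {p c : ℝ} (hp : 1 / 2 < p) (hp1 : p < 1) {η : ℤ → ℕ}
    (hη : memH η) : Summable fun j => wFactor p c η j - 1 :=
  (summable_wFactor_groundConfig_sub_one (c := c) hp hp1).congr_cofinite <|
    hη.eventuallyEq_groundConfig.mono fun j hj => by simp only [wFactor, hj]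

theorem wBlock_mul_prod_wFactor_eq {p c : ℝ} (hp : 1 / 2 < p) (hp1 : p < 1) {η η' : ℤ → ℕ}
    (hη : memH η) (hη' : memH η') (s : Finset ℤ) (hηη' : ∀ j ∉ s, η j = η' j) :
    wBlock p c η * ∏ j ∈ s, wFactor p c η' j = wBlock p c η' * ∏ j ∈ s, wFactor p c η j :=
  Real.tprod_mul_prod_eq_tprod_mul_prod (summable_wFactor_sub_one hp hp1 hη)
    (summable_wFactor_sub_one hp hp1 hη') s fun j hj => by simp only [wFactor, hηη' j hj]

/-- Detailed balance (reversibility) of the ASEP blocking measure: if `η ∈ H` has a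
particle at site `i` and a hole at site `i+1`, and `η'` is obtained from `η` by moving
that particle from `i` to `i+1`, then `η' ∈ H` and `p · w^c(η) = q · w^c(η')`. -/
theorem wBlock_detailed_balance (p c : ℝ) (hp : 1 / 2 < p) (hp1 : p < 1)
    (η : ℤ → ℕ) (hη : memH η) (i : ℤ) (h1 : η i = 1) (h0 : η (i + 1) = 0) :
    memH (Function.update (Function.update η i 0) (i + 1) 1) ∧
      p * wBlock p c η =
        (1 - p) * wBlock p c (Function.update (Function.update η i 0) (i + 1) 1) := by
  set η' := Function.update (Function.update η i 0) (i + 1) 1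
  have hη' : memH η' := (hη.update i zero_le_one).update (i + 1) le_rfl
  have hp0 : 0 < p := by linarith
  have hne : i ≠ i + 1 := by omega
  have hprod : wBlock p c η' * (rho p c i * (1 - rho p c (i + 1))) =
      wBlock p c η * ((1 - rho p c i) * rho p c (i + 1)) := by
    have := wBlock_mul_prod_wFactor_eq (c := c) hp hp1 hη' hη {i, i + 1} fun j hj => by
      simp only [Finset.mem_insert, Finset.mem_singleton, not_or] at hj
      simp only [η', Function.update_of_ne hj.2, Function.update_of_ne hj.1]
    simpa [Finset.prod_pair hne, wFactor, η', h1, h0, hne] using this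
  have hpos : 0 < rho p c i * (1 - rho p c (i + 1)) :=
    mul_pos (rho_pos hp0 hp1 i) (sub_pos.mpr (rho_lt_one hp0 hp1 (i + 1)))
  refine ⟨hη', mul_right_cancel₀ hpos.ne' ?_⟩
  linear_combination
    wBlock p c η * rho_mul_one_sub_rho_add_one (c := c) hp0 hp1 i - (1 - p) * hprod
end

section
/- The zero range blocking measure is a probability measure: for every z ∈ Ω the family of factors (i ↦ (p/q)^{(i−1) z_i} (1 − (p/q)^{i−1})), indexed by i ≤ 0, is multipliable with strictly positive product μ(z), and the family (z ↦ μ(z)) over the countable set Ω is summable with ∑_{z ∈ Ω} μ(z) = 1. -/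
/- Zero range configurations on `ℤ_{≤0}`: we encode `z : ℤ_{≤0} → ℕ` as `z : ℕ → ℕ`,
with `z k` standing for the occupation `z_{-k}` of site `-k`; `Ω` consists of such
configurations with finite support. Throughout, `p ∈ (1/2, 1)` and `q = 1 - p`. -/

/-- The factor of the zero range blocking measure at site `i = -k ≤ 0`:
`(p/q)^{(i-1) z_i} (1 - (p/q)^{i-1})`, the probability that a Geometric random variable
with parameter `1 - (p/q)^{i-1}` equals `z_i`. -/
noncomputable def zrFactor (p : ℝ) (z : ℕ → ℕ) (k : ℕ) : ℝ :=
  (p / (1 - p)) ^ ((-(k : ℤ) - 1) * z k) * (1 - (p / (1 - p)) ^ (-(k : ℤ) - 1))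

/-- The zero range blocking weight `μ(z) = ∏_{i ≤ 0} (p/q)^{(i-1) z_i} (1 - (p/q)^{i-1})`. -/
noncomputable def zrMu (p : ℝ) (z : ℕ → ℕ) : ℝ := ∏' k : ℕ, zrFactor p z k

/-!
With `t = q/p ∈ (0, 1)` and `x_k = t^{k+1}`, the factor at site `-k` is the geometric weight
`f k n = x_k^n (1 - x_k)`, so `μ` is the joint law of independent geometric variables `X_k`.
Since `∑ P(X_k ≠ 0) = ∑ x_k < ∞`, the logarithms of the factors are summable, which gives
convergence and positivity of the products. A configuration vanishing from site `m` on has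
weight `∏_{k<m} f k (z k) · T_m` with `T_m = ∏_{k ≥ m} f k 0`; summing over these
configurations gives `T_m`, and `T_m → 1`, so the total mass is `1`.
-/

open Filter Topology Finset

local notation "Ω" => {z : ℕ → ℕ // Set.Finite (Function.support z)}

theorem hasSum_fin_pi_prod {β : Type*} {m : ℕ} {g : Fin m → β → ℝ} {a : Fin m → ℝ}
    (hg0 : ∀ i b, 0 ≤ g i b) (hg : ∀ i, HasSum (g i) (a i)) :
    HasSum (fun w : Fin m → β => ∏ i, g i (w i)) (∏ i, a i) := by
  induction m with
  | zero => simp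
  | succ m ih =>
    have htail := ih (fun i => hg0 i.succ) fun i => hg i.succ
    have hsum := (hg 0).summable.mul_of_nonneg htail.summable (hg0 0)
      fun w => prod_nonneg fun i _ => hg0 i.succ (w i)
    rw [← (Fin.consEquiv fun _ => β).hasSum_iff, Fin.prod_univ_succ]
    refine ((hg 0).mul htail hsum).congr_fun fun x => ?_
    simp [Fin.consEquiv, Fin.prod_univ_succ]

theorem hasSum_pow_mul_one_sub {x : ℝ} (hx0 : 0 ≤ x) (hx1 : x < 1) :
    HasSum (fun n => x ^ n * (1 - x)) 1 := by
  simpa [inv_mul_cancel₀ (sub_ne_zero.2 hx1.ne')] using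
    (hasSum_geometric_of_lt_one hx0 hx1).mul_right (1 - x)

theorem eventually_atTop_forall_ge_eq_zero {M : Type*} [Zero M] {z : ℕ → M}
    (hz : (Function.support z).Finite) : ∀ᶠ m in atTop, ∀ k, m ≤ k → z k = 0 := by
  obtain ⟨N, hN⟩ := hz.bddAbove
  filter_upwards [eventually_gt_atTop N] with m hm k hk
  by_contra h
  exact absurd (hN h) (by omega)

def vanishingFrom (m : ℕ) : Set Ω := {z | ∀ k, m ≤ k → z.1 k = 0}

section ProductOfDistributions

variable {f : ℕ → ℕ → ℝ}

theorem summable_log_apply_zero (hzero : Summable fun k => 1 - f k 0) :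
    Summable fun k => Real.log (f k 0) :=
  (Real.summable_log_one_add_of_summable hzero.neg).congr fun k => by ring_nf

theorem summable_log_apply_of_finite_support (hzero : Summable fun k => 1 - f k 0)
    {z : ℕ → ℕ} (hz : (Function.support z).Finite) :
    Summable fun k => Real.log (f k (z k)) :=
  (summable_log_apply_zero hzero).congr_cofinite <|
    hz.eventually_cofinite_notMem.mono fun k hk => by simp only [Function.notMem_support.1 hk]

theorem hasProd_apply_of_finite_support (hpos : ∀ k n, 0 < f k n)
    (hzero : Summable fun k => 1 - f k 0) {z : ℕ → ℕ} (hz : (Function.support z).Finite) :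
    HasProd (fun k => f k (z k)) (Real.exp (∑' k, Real.log (f k (z k)))) :=
  Real.hasProd_of_hasSum_log (fun k => hpos k _)
    (summable_log_apply_of_finite_support hzero hz).hasSum

theorem tendsto_tprod_apply_zero_nat_add (hpos : ∀ k, 0 < f k 0)
    (hzero : Summable fun k => 1 - f k 0) :
    Tendsto (fun m => ∏' k, f (k + m) 0) atTop (𝓝 1) := by
  have h := (Real.continuous_exp.tendsto 0).comp
    (tendsto_sum_nat_add fun k => Real.log (f k 0))
  rw [Real.exp_zero] at h
  refine h.congr fun m => ?_
  exact Real.rexp_tsum_eq_tprod (fun k => hpos (k + m))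
    ((summable_nat_add_iff m).2 (summable_log_apply_zero hzero))

theorem tprod_apply_eq_prod_range_mul_tprod {z : ℕ → ℕ} {m : ℕ}
    (hz : ∀ k, m ≤ k → z k = 0) (hmul : Multipliable fun k => f (k + m) 0) :
    ∏' k, f k (z k) = (∏ k ∈ range m, f k (z k)) * ∏' k, f (k + m) 0 := by
  have htail : (fun k => f (k + m) (z (k + m))) = fun k => f (k + m) 0 :=
    funext fun k => by rw [hz (k + m) (Nat.le_add_left m k)]
  rw [← Multipliable.prod_mul_tprod_nat_mul' (f := fun k => f k (z k)) (htail ▸ hmul), htail]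

theorem hasSum_indicator_vanishingFrom (hnonneg : ∀ k n, 0 ≤ f k n)
    (hsum : ∀ k, HasSum (f k) 1) {m : ℕ} (hmul : Multipliable fun k => f (k + m) 0) :
    HasSum ((vanishingFrom m).indicator fun z => ∏' k, f k (z.1 k))
      (∏' k, f (k + m) 0) := by
  let e : (Fin m → ℕ) → Ω := fun w => ⟨Function.extend Fin.val w 0,
    (Set.finite_Iio m).subset fun k hk => by
      by_contra hkm
      exact hk (Function.extend_apply' _ _ _ fun ⟨i, hi⟩ => hkm (hi ▸ i.isLt))⟩
  have he : ∀ w (i : Fin m), (e w).1 i = w i := fun w i => Fin.val_injective.extend_apply _ _ i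
  have he_inj : Function.Injective e := fun w w' h => funext fun i => by
    rw [← he w, ← he w', h]
  have he_mem : ∀ w, e w ∈ vanishingFrom m := fun w k hk =>
    Function.extend_apply' _ _ _ fun ⟨i, hi⟩ => (hi ▸ i.isLt).not_ge hk
  have he_range : ∀ z ∉ Set.range e, ((vanishingFrom m).indicator
      (fun z => ∏' k, f k (z.1 k))) z = 0 := by
    refine fun z hz => Set.indicator_of_notMem (fun hzm => hz ⟨fun i => z.1 i, ?_⟩) _
    refine Subtype.ext (funext fun k => ?_)
    by_cases hk : k < m
    · exact he _ ⟨k, hk⟩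
    · exact (he_mem _ k (not_lt.1 hk)).trans (hzm k (not_lt.1 hk)).symm
  rw [← he_inj.hasSum_iff he_range]
  have hprod := (hasSum_fin_pi_prod (m := m) (fun i => hnonneg i) fun i => hsum i).mul_right
    (∏' k, f (k + m) 0)
  rw [prod_const_one, one_mul] at hprod
  refine hprod.congr_fun fun w => ?_
  rw [Function.comp_apply, Set.indicator_of_mem (he_mem w),
    tprod_apply_eq_prod_range_mul_tprod (he_mem w) hmul, ← Fin.prod_univ_eq_prod_range]
  simp only [he]

theorem hasSum_tprod_apply (hpos : ∀ k n, 0 < f k n) (hsum : ∀ k, HasSum (f k) 1)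
    (hzero : Summable fun k => 1 - f k 0) :
    HasSum (fun z : Ω => ∏' k, f k (z.1 k)) 1 := by
  have hV : ∀ m, HasSum ((vanishingFrom m).indicator fun z => ∏' k, f k (z.1 k))
      (∏' k, f (k + m) 0) :=
    fun m => hasSum_indicator_vanishingFrom (fun k n => (hpos k n).le) hsum <|
      Real.multipliable_of_summable_log (fun k => hpos (k + m) 0)
        ((summable_nat_add_iff m).2 (summable_log_apply_zero hzero))
  have hT := tendsto_tprod_apply_zero_nat_add (fun k => hpos k 0) hzero
  have hW : ∀ z : Ω, 0 ≤ ∏' k, f k (z.1 k) := fun z =>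
    ((hasProd_apply_of_finite_support hpos hzero z.2).tprod_eq ▸ Real.exp_pos _).le
  refine hasSum_of_isLUB_of_nonneg 1 hW ⟨?_, fun b hb => ?_⟩
  · rintro _ ⟨F, rfl⟩
    have hF : ∀ᶠ m in atTop, ∀ z ∈ F, z ∈ vanishingFrom m :=
      (eventually_all_finset F).2 fun z _ => eventually_atTop_forall_ge_eq_zero z.2
    refine ge_of_tendsto hT (hF.mono fun m hm => ?_)
    calc ∑ z ∈ F, ∏' k, f k (z.1 k)
        = ∑ z ∈ F, (vanishingFrom m).indicator (fun z => ∏' k, f k (z.1 k)) z :=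
          (sum_congr rfl fun z hz =>
            Set.indicator_of_mem (hm z hz) (fun z : Ω => ∏' k, f k (z.1 k))).symm
      _ ≤ ∏' k, f (k + m) 0 :=
          sum_le_hasSum F (fun z _ => Set.indicator_nonneg (fun z _ => hW z) z) (hV m)
  · refine le_of_tendsto' hT fun m => hasSum_le_of_sum_le (hV m) fun F => ?_
    exact (sum_le_sum fun z _ => Set.indicator_le_self' (fun z _ => hW z) z).trans
      (hb ⟨F, rfl⟩)

end ProductOfDistributions

theorem zrFactor_eq (p : ℝ) (z : ℕ → ℕ) (k : ℕ) :
    zrFactor p z k = ((((1 - p) / p) ^ (k + 1)) ^ z k) * (1 - ((1 - p) / p) ^ (k + 1)) := by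
  have h : (p / (1 - p)) ^ (-(k : ℤ) - 1) = ((1 - p) / p) ^ (k + 1) := by
    rw [show -(k : ℤ) - 1 = -((k + 1 : ℕ) : ℤ) by push_cast; ring, zpow_neg, zpow_natCast,
      ← inv_pow, inv_div]
  rw [zrFactor, zpow_mul, h, zpow_natCast]

/-- The zero range blocking measure is a probability measure: for every `z ∈ Ω` the
family of factors is multipliable with strictly positive product `μ(z)`, and the family
`z ↦ μ(z)` is summable over the countable set `Ω` with total mass `1`. -/
theorem zrMu_probability_measure (p : ℝ) (hp : 1 / 2 < p) (hp1 : p < 1) :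
    (∀ z : ℕ → ℕ, (Function.support z).Finite →
      Multipliable (zrFactor p z) ∧ 0 < zrMu p z) ∧
    Summable (fun z : {z : ℕ → ℕ // (Function.support z).Finite} => zrMu p z.1) ∧
    ∑' z : {z : ℕ → ℕ // (Function.support z).Finite}, zrMu p z.1 = 1 := by
  set t := (1 - p) / p
  have ht0 : 0 < t := div_pos (by linarith) (by linarith)
  have ht1 : t < 1 := (div_lt_one (by linarith)).2 (by linarith)
  have hx1 : ∀ k : ℕ, t ^ (k + 1) < 1 := fun k => pow_lt_one₀ ht0.le ht1 k.succ_ne_zero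
  set f : ℕ → ℕ → ℝ := fun k n => (t ^ (k + 1)) ^ n * (1 - t ^ (k + 1))
  have hpos : ∀ k n, 0 < f k n := fun k n => mul_pos (by positivity) (sub_pos.2 (hx1 k))
  have hsum : ∀ k, HasSum (f k) 1 := fun k => hasSum_pow_mul_one_sub (by positivity) (hx1 k)
  have hzero : Summable fun k => 1 - f k 0 := by
    simpa [f, pow_succ] using (summable_geometric_of_lt_one ht0.le ht1).mul_right t
  have hfactor : zrFactor p = fun z k => f k (z k) := funext₂ (zrFactor_eq p)
  have hmu : ∀ z, zrMu p z = ∏' k, f k (z k) := fun z => by rw [zrMu, hfactor]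
  refine ⟨fun z hz => ?_, ?_⟩
  · have h := hasProd_apply_of_finite_support hpos hzero hz
    rw [hmu, hfactor, h.tprod_eq]
    exact ⟨h.multipliable, Real.exp_pos _⟩
  · have h := hasSum_tprod_apply hpos hsum hzero
    simp only [hmu]
    exact ⟨h.summable, h.tsum_eq⟩
end

section
/- Detailed balance (reversibility) of the zero range blocking measure with right boundary: for every z ∈ Ω, (i) if i ≤ −1 and z_i ≥ 1, then with z′ equal to z except z′_i = z_i − 1 and z′_{i+1} = z_{i+1} + 1, one has z′ ∈ Ω and p · μ(z) = q · μ(z′); and (ii) if z_0 ≥ 1, then with z″ equal to z except z″_0 = z_0 − 1, one has z″ ∈ Ω and p · μ(z) = q · μ(z″). -/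
open Function

theorem Multipliable.tprod_update_mul {α β : Type*} [CommMonoid α] [TopologicalSpace α]
    [ContinuousMul α] [T2Space α] [DecidableEq β] {f : β → α} (hf : Multipliable f)
    (b : β) (c : α) : ∏' i, Function.update f b (c * f b) i = c * ∏' i, f i := by
  have hupd : Function.update f b (c * f b) = Pi.mulSingle b c * f := by
    ext i
    rcases eq_or_ne i b with rfl | h <;> simp [*]
  rw [hupd, Pi.mul_def, (hasProd_pi_single b c).multipliable.tprod_mul hf, tprod_pi_single]

theorem Set.Finite.support_update {ι M : Type*} [Zero M] [DecidableEq ι] {f : ι → M}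
    (hf : (support f).Finite) (i : ι) (m : M) : (support (update f i m)).Finite := by
  classical
  rw [support_update_eq_ite]
  split_ifs
  exacts [hf.sdiff, hf.insert i]

theorem zrFactor_update {p : ℝ} (hr : p / (1 - p) ≠ 0) (z : ℕ → ℕ) (j m : ℕ) :
    zrFactor p (update z j m) = update (zrFactor p z) j
      ((p / (1 - p)) ^ ((-(j : ℤ) - 1) * ((m : ℤ) - z j)) * zrFactor p z j) := by
  ext i
  rcases eq_or_ne i j with rfl | h
  · simp only [zrFactor, update_self, ← mul_assoc, ← zpow_add₀ hr]
    ring_nf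
  · simp [zrFactor, h]

theorem multipliable_zrFactor {p : ℝ} (hr : 1 < |p / (1 - p)|) {z : ℕ → ℕ}
    (hz : (support z).Finite) : Multipliable (zrFactor p z) := by
  have hfin : Multipliable fun k : ℕ => (p / (1 - p)) ^ ((-(k : ℤ) - 1) * z k) := by
    refine multipliable_of_hasFiniteMulSupport (hz.subset fun k hk => ?_)
    contrapose! hk
    simp_all
  have hgeom : Summable fun k : ℕ => ‖-(p / (1 - p))⁻¹ ^ (k + 1)‖ := by
    simp only [norm_neg, norm_pow, Real.norm_eq_abs, abs_inv]
    exact (summable_geometric_of_lt_one (by positivity) (inv_lt_one_of_one_lt₀ hr)).comp_injective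
      (add_left_injective 1)
  convert hfin.mul (multipliable_one_add_of_summable hgeom) using 2 with k
  rw [zrFactor, ← sub_eq_add_neg, inv_pow, ← zpow_natCast, ← zpow_neg]
  push_cast
  ring_nf

theorem zrMu_update {p : ℝ} (hr : 1 < |p / (1 - p)|) {z : ℕ → ℕ}
    (hz : (support z).Finite) (j m : ℕ) :
    zrMu p (update z j m) = (p / (1 - p)) ^ ((-(j : ℤ) - 1) * ((m : ℤ) - z j)) * zrMu p z := by
  rw [zrMu, zrFactor_update (abs_pos.mp (one_pos.trans hr)),
    (multipliable_zrFactor hr hz).tprod_update_mul, zrMu]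

theorem zrMu_jump {p : ℝ} (hr : 1 < |p / (1 - p)|) {z : ℕ → ℕ} (hz : (support z).Finite)
    {k : ℕ} (hk : 1 ≤ k) (hzk : 1 ≤ z k) :
    zrMu p (update (update z k (z k - 1)) (k - 1) (z (k - 1) + 1)) = p / (1 - p) * zrMu p z := by
  rw [zrMu_update hr (hz.support_update k _), zrMu_update hr hz, update_of_ne (by omega),
    ← mul_assoc, ← zpow_add₀ (abs_pos.mp (one_pos.trans hr))]
  convert congrArg (· * zrMu p z) (zpow_one (p / (1 - p))) using 3
  push_cast [Nat.cast_sub hk, Nat.cast_sub hzk]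
  ring

theorem zrMu_exit {p : ℝ} (hr : 1 < |p / (1 - p)|) {z : ℕ → ℕ} (hz : (support z).Finite)
    (hz0 : 1 ≤ z 0) : zrMu p (update z 0 (z 0 - 1)) = p / (1 - p) * zrMu p z := by
  rw [zrMu_update hr hz]
  convert congrArg (· * zrMu p z) (zpow_one (p / (1 - p))) using 3
  push_cast [Nat.cast_sub hz0]
  ring

/-- Detailed balance (reversibility) of the zero range blocking measure with right
boundary. In our encoding site `i = -k`, so a jump from site `i ≤ -1` to `i + 1` moves a
particle from index `k = -i ≥ 1` to index `k - 1`, and the boundary exit removes a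
particle at index `0`.
(i) If `k ≥ 1` and `z_{-k} ≥ 1`, then with `z'` equal to `z` except `z'_{-k} = z_{-k} - 1`
and `z'_{-(k-1)} = z_{-(k-1)} + 1`, one has `z' ∈ Ω` and `p μ(z) = q μ(z')`.
(ii) If `z_0 ≥ 1`, then with `z''` equal to `z` except `z''_0 = z_0 - 1`, one has
`z'' ∈ Ω` and `p μ(z) = q μ(z'')`. -/
theorem zrMu_detailed_balance (p : ℝ) (hp : 1 / 2 < p) (hp1 : p < 1)
    (z : ℕ → ℕ) (hz : (Function.support z).Finite) :
    (∀ k : ℕ, 1 ≤ k → 1 ≤ z k →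
      (Function.support
          (Function.update (Function.update z k (z k - 1)) (k - 1) (z (k - 1) + 1))).Finite ∧
      p * zrMu p z =
        (1 - p) * zrMu p
          (Function.update (Function.update z k (z k - 1)) (k - 1) (z (k - 1) + 1))) ∧
    (1 ≤ z 0 →
      (Function.support (Function.update z 0 (z 0 - 1))).Finite ∧
      p * zrMu p z = (1 - p) * zrMu p (Function.update z 0 (z 0 - 1))) := by
  have hq : 1 - p ≠ 0 := by linarith
  have hr : 1 < |p / (1 - p)| :=
    (one_lt_div (by linarith)).mpr (by linarith) |>.trans_le (le_abs_self _)
  have balance : p = (1 - p) * (p / (1 - p)) := (mul_div_cancel₀ p hq).symm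
  refine ⟨fun k hk hzk => ⟨(hz.support_update _ _).support_update _ _, ?_⟩,
    fun hz0 => ⟨hz.support_update _ _, ?_⟩⟩
  · rw [zrMu_jump hr hz hk hzk, ← mul_assoc, ← balance]
  · rw [zrMu_exit hr hz hz0, ← mul_assoc, ← balance]
end
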